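/- arXiv:1810.04229 — 9 statements merged into one kernel-verified Lean document; each statement's English description precedes it below -/
import Mathlib

section
/- For each k ≥ 1 and each integer n ≥ 2, if z ∈ ℂ satisfies |z| > 2^n, then |Q_{M_{k-1},M_k}(z)| = |z^(2^(m_k+1)) + c_k| > 2^(n+1). -/
/-!
Between `M_{k-1}` and `M_k` every map is `z ↦ z ^ 2` except the last one, so the block composes
to `z ^ E + c_k` with `E = 2 ^ (m_k + 1)`. The hypothesis on `m_k` gives `|c_k| < 2 ^ E`, and for
`|z| > 2 ^ n` the reverse triangle inequality yields `|z ^ E + c_k| > 2 ^ (n E) - 2 ^ E ≥ 2 ^ (n + 1)`.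
-/

theorem StrictMono.ne_of_lt_of_lt_succ {M : ℕ → ℕ} (hM : StrictMono M) {k x : ℕ}
    (hlt : M k < x) (hlt' : x < M (k + 1)) (l : ℕ) : M l ≠ x := by
  rintro rfl
  have := hM.lt_iff_lt.mp hlt
  have := hM.lt_iff_lt.mp hlt'
  omega

section Composition

variable {α : Type*} [Monoid α] {P : ℕ → α → α} {Q : ℕ → ℕ → α → α}
  (hQ0 : ∀ n z, Q n n z = z) (hQs : ∀ a n z, a ≤ n → Q a (n + 1) z = P (n + 1) (Q a n z))
include hQ0 hQs

theorem composition_eq_pow_two_pow {a m : ℕ} (hP : ∀ j, 1 ≤ j → j ≤ m → ∀ w, P (a + j) w = w ^ 2)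
    (z : α) : ∀ j ≤ m, Q a (a + j) z = z ^ 2 ^ j
  | 0, _ => by simpa using hQ0 a z
  | j + 1, hj => by
    rw [← add_assoc, hQs a (a + j) z (by omega), add_assoc, hP (j + 1) (by omega) hj,
      composition_eq_pow_two_pow hP z j (by omega), ← pow_mul, ← pow_succ]

theorem composition_block_eq [Add α] {a m : ℕ} {c : α}
    (hP : ∀ j, 1 ≤ j → j ≤ m → ∀ w, P (a + j) w = w ^ 2)
    (hlast : ∀ w, P (a + m + 1) w = w ^ 2 + c) (z : α) :
    Q a (a + m + 1) z = z ^ 2 ^ (m + 1) + c := by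
  rw [hQs a (a + m) z (by omega), hlast, composition_eq_pow_two_pow hQ0 hQs hP z m le_rfl,
    ← pow_mul, ← pow_succ]

end Composition

theorem two_pow_succ_add_two_pow_le_two_pow_mul {n E : ℕ} (hn : 2 ≤ n) (hE : 2 ≤ E) :
    2 ^ (n + 1) + 2 ^ E ≤ 2 ^ (n * E) := by
  obtain ⟨s, hs⟩ := Nat.exists_eq_add_one_of_ne_zero (by positivity : n * E ≠ 0)
  rw [hs, pow_succ 2 s, mul_two]
  exact add_le_add (Nat.pow_le_pow_right two_pos (by nlinarith))
    (Nat.pow_le_pow_right two_pos (by nlinarith))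

theorem two_pow_succ_lt_norm_pow_add {𝕜 : Type*} [NormedDivisionRing 𝕜] {n E : ℕ}
    (hn : 2 ≤ n) (hE : 2 ≤ E) {z c : 𝕜} (hz : 2 ^ n < ‖z‖) (hc : ‖c‖ < 2 ^ E) :
    (2 : ℝ) ^ (n + 1) < ‖z ^ E + c‖ := by
  have hsum : (2 : ℝ) ^ (n + 1) + 2 ^ E ≤ 2 ^ (n * E) := by
    exact_mod_cast two_pow_succ_add_two_pow_le_two_pow_mul hn hE
  have hzE : (2 : ℝ) ^ (n * E) < ‖z‖ ^ E := by
    rw [pow_mul]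
    exact pow_lt_pow_left₀ hz (by positivity) (by omega)
  calc (2 : ℝ) ^ (n + 1) ≤ 2 ^ (n * E) - 2 ^ E := by linarith
    _ < ‖z‖ ^ E - ‖c‖ := by linarith
    _ = ‖z ^ E‖ - ‖c‖ := by rw [norm_pow]
    _ ≤ ‖z ^ E + c‖ := norm_sub_le_norm_add _ _

theorem stmt_0_general
    (c : ℕ → ℂ) (msq : ℕ → ℕ)
    (hinv : ∀ k, 1 ≤ k → Real.sqrt (‖c k‖) + 1 < (2 : ℝ) ^ 2 ^ msq k)
    (M : ℕ → ℕ)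
    (hMs : ∀ k, M (k + 1) = M k + (msq (k + 1) + 1))
    (P : ℕ → ℂ → ℂ)
    (hP1 : ∀ k, 1 ≤ k → ∀ z, P (M k) z = z ^ 2 + c k)
    (hP2 : ∀ n, (∀ k, 1 ≤ k → M k ≠ n) → ∀ z, P n z = z ^ 2)
    (Q : ℕ → ℕ → ℂ → ℂ)
    (hQ0 : ∀ n z, Q n n z = z)
    (hQs : ∀ a n z, a ≤ n → Q a (n + 1) z = P (n + 1) (Q a n z)) :
    ∀ k, 1 ≤ k → ∀ n : ℕ, 2 ≤ n → ∀ z : ℂ, (2 : ℝ) ^ n < ‖z‖ →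
      ‖Q (M (k - 1)) (M k) z‖
          = ‖z ^ 2 ^ (msq k + 1) + c k‖ ∧
        (2 : ℝ) ^ (n + 1) < ‖z ^ 2 ^ (msq k + 1) + c k‖ := by
  intro k hk n hn z hz
  obtain ⟨k, rfl⟩ := Nat.exists_eq_add_of_le' hk
  rw [Nat.add_sub_cancel]
  have hMk : M (k + 1) = M k + msq (k + 1) + 1 := by rw [hMs, add_assoc]
  have hM : StrictMono M := strictMono_nat_of_lt_succ fun k => by rw [hMs]; omega
  have hsquare : ∀ j, 1 ≤ j → j ≤ msq (k + 1) → ∀ w, P (M k + j) w = w ^ 2 := fun j hj hjm =>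
    hP2 _ fun l _ => hM.ne_of_lt_of_lt_succ (k := k) (by omega) (by omega) l
  have hlast : ∀ w, P (M k + msq (k + 1) + 1) w = w ^ 2 + c (k + 1) := by
    rw [← hMk]; exact hP1 (k + 1) hk
  have hc : ‖c (k + 1)‖ < 2 ^ 2 ^ (msq (k + 1) + 1) := by
    rw [pow_succ, pow_mul, ← Real.sqrt_lt' (by positivity)]
    linarith [hinv (k + 1) hk]
  refine ⟨by rw [hMk, composition_block_eq hQ0 hQs hsquare hlast], ?_⟩
  exact two_pow_succ_lt_norm_pow_add hn (Nat.one_lt_two_pow (by omega)) hz hc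

/-- For each k ≥ 1 and each integer n ≥ 2, if |z| > 2^n, then
|Q_{M_{k-1},M_k}(z)| = |z^(2^(m_k+1)) + c_k| > 2^(n+1). -/
theorem stmt_0
    (c : ℕ → ℂ) (msq : ℕ → ℕ)
    (hc : ∀ k, 1 ≤ k → 4 < ‖c k‖)
    (hmsq : ∀ k, 1 ≤ k → 1 ≤ msq k)
    (hinv : ∀ k, 1 ≤ k → Real.sqrt (‖c k‖) + 1 < (2 : ℝ) ^ 2 ^ msq k)
    (M : ℕ → ℕ) (hM0 : M 0 = 0)
    (hMs : ∀ k, M (k + 1) = M k + (msq (k + 1) + 1))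
    (P : ℕ → ℂ → ℂ)
    (hP1 : ∀ k, 1 ≤ k → ∀ z, P (M k) z = z ^ 2 + c k)
    (hP2 : ∀ n, (∀ k, 1 ≤ k → M k ≠ n) → ∀ z, P n z = z ^ 2)
    (Q : ℕ → ℕ → ℂ → ℂ)
    (hQ0 : ∀ n z, Q n n z = z)
    (hQs : ∀ a n z, a ≤ n → Q a (n + 1) z = P (n + 1) (Q a n z)) :
    ∀ k, 1 ≤ k → ∀ n : ℕ, 2 ≤ n → ∀ z : ℂ, (2 : ℝ) ^ n < ‖z‖ →
      ‖Q (M (k - 1)) (M k) z‖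
          = ‖z ^ 2 ^ (msq k + 1) + c k‖ ∧
        (2 : ℝ) ^ (n + 1) < ‖z ^ 2 ^ (msq k + 1) + c k‖ :=
  stmt_0_general c msq hinv M hMs P hP1 hP2 Q hQ0 hQs
end

section
/- For every z₀ ∈ E = ⋂_{k≥1} S_k, the entire orbit lies outside the closed unit disc: |Q_m(z₀)| > 1 for every m ≥ 0. -/
open Complex Metric Set Filter

/-! An orbit point `Q_m(z₀)` in the closed unit disc stays there under the plain squarings that
follow, up to the step before the next perturbation time `M_k`; adding `c_k` with `|c_k| > 4`
then throws it out of the disc of radius 2, so `z₀ ∉ S_k`. -/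

theorem StrictMono.exists_lt_apply_forall_notMem_Ioo {M : ℕ → ℕ} (hM : StrictMono M) (m : ℕ) :
    ∃ k, 1 ≤ k ∧ m < M k ∧ ∀ j, 1 ≤ j → M j ∉ Ioo m (M k) := by
  have hex : ∃ k, 1 ≤ k ∧ m < M k := ⟨m + 1, by omega, hM.le_apply⟩
  refine ⟨Nat.find hex, (Nat.find_spec hex).1, (Nat.find_spec hex).2, fun j hj hMj => ?_⟩
  have hlt : j < Nat.find hex := hM.lt_iff_lt.mp hMj.2
  exact Nat.find_min hex hlt ⟨hj, hMj.1⟩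

theorem norm_le_one_of_forall_eq_sq {R : Type*} [SeminormedRing R] {x : ℕ → R} {m N : ℕ}
    (hm : ‖x m‖ ≤ 1) (hsq : ∀ n, m ≤ n → n < N → x (n + 1) = x n ^ 2)
    {n : ℕ} (hmn : m ≤ n) (hnN : n ≤ N) : ‖x n‖ ≤ 1 := by
  induction n, hmn using Nat.le_induction with
  | base => exact hm
  | succ n hmn ih =>
    rw [hsq n hmn (by omega)]
    calc ‖x n ^ 2‖ ≤ ‖x n‖ ^ 2 := norm_pow_le' _ two_pos
      _ ≤ 1 := pow_le_one₀ (norm_nonneg _) (ih (by omega))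

theorem two_lt_norm_sq_add {R : Type*} [SeminormedRing R] {w c : R}
    (hw : ‖w‖ ≤ 1) (hc : 3 < ‖c‖) : 2 < ‖w ^ 2 + c‖ := by
  have hw2 : ‖w ^ 2‖ ≤ 1 :=
    (norm_pow_le' w two_pos).trans (pow_le_one₀ (norm_nonneg _) hw)
  have hsub : ‖c‖ ≤ ‖w ^ 2 + c‖ + ‖w ^ 2‖ := by
    rw [add_comm (w ^ 2) c]
    exact norm_le_add_norm_add c (w ^ 2)
  linarith

theorem stmt_1_general
    (c : ℕ → ℂ) (msq : ℕ → ℕ)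
    (hc : ∀ k, 1 ≤ k → 4 < ‖c k‖)
    (M : ℕ → ℕ)
    (hMs : ∀ k, M (k + 1) = M k + (msq (k + 1) + 1))
    (P : ℕ → ℂ → ℂ)
    (hP1 : ∀ k, 1 ≤ k → ∀ z, P (M k) z = z ^ 2 + c k)
    (hP2 : ∀ n, (∀ k, 1 ≤ k → M k ≠ n) → ∀ z, P n z = z ^ 2)
    (Q : ℕ → ℕ → ℂ → ℂ)
    (hQs : ∀ a n z, a ≤ n → Q a (n + 1) z = P (n + 1) (Q a n z))
    (S : ℕ → Set ℂ)
    (hS : ∀ k, S k = {z : ℂ | ‖Q 0 (M k) z‖ ≤ 2})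
    (E : Set ℂ) (hE : E = ⋂ k, ⋂ (_ : 1 ≤ k), S k) :
    ∀ z₀ ∈ E, ∀ m : ℕ, 1 < ‖Q 0 m z₀‖ := by
  intro z₀ hz₀ m
  by_contra! hm
  have hMmono : StrictMono M := strictMono_nat_of_lt_succ fun k => by rw [hMs]; omega
  obtain ⟨k, hk, hmk, hgap⟩ := hMmono.exists_lt_apply_forall_notMem_Ioo m
  have hw : ‖Q 0 (M k - 1) z₀‖ ≤ 1 :=
    norm_le_one_of_forall_eq_sq (x := fun n => Q 0 n z₀) hm
      (fun n hmn hn => by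
        rw [hQs 0 n z₀ n.zero_le, hP2 _ fun j hj hMj => hgap j hj ⟨by omega, by omega⟩])
      (by omega) le_rfl
  have hjump : Q 0 (M k) z₀ = Q 0 (M k - 1) z₀ ^ 2 + c k := by
    have h := hQs 0 (M k - 1) z₀ (Nat.zero_le _)
    rwa [Nat.sub_add_cancel (by omega), hP1 k hk] at h
  have hmem : ‖Q 0 (M k) z₀‖ ≤ 2 := by
    have : z₀ ∈ S k := by rw [hE] at hz₀; exact mem_iInter₂.mp hz₀ k hk
    rwa [hS k] at this
  rw [hjump] at hmem
  exact hmem.not_gt (two_lt_norm_sq_add hw (by linarith [hc k hk]))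

/-- For every z₀ ∈ E = ⋂_{k≥1} S_k, the entire orbit lies outside the
closed unit disc: |Q_m(z₀)| > 1 for every m ≥ 0. -/
theorem stmt_1
    (c : ℕ → ℂ) (msq : ℕ → ℕ)
    (hc : ∀ k, 1 ≤ k → 4 < ‖c k‖)
    (hmsq : ∀ k, 1 ≤ k → 1 ≤ msq k)
    (hinv : ∀ k, 1 ≤ k → Real.sqrt (‖c k‖) + 1 < (2 : ℝ) ^ 2 ^ msq k)
    (M : ℕ → ℕ) (hM0 : M 0 = 0)
    (hMs : ∀ k, M (k + 1) = M k + (msq (k + 1) + 1))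
    (P : ℕ → ℂ → ℂ)
    (hP1 : ∀ k, 1 ≤ k → ∀ z, P (M k) z = z ^ 2 + c k)
    (hP2 : ∀ n, (∀ k, 1 ≤ k → M k ≠ n) → ∀ z, P n z = z ^ 2)
    (Q : ℕ → ℕ → ℂ → ℂ)
    (hQ0 : ∀ n z, Q n n z = z)
    (hQs : ∀ a n z, a ≤ n → Q a (n + 1) z = P (n + 1) (Q a n z))
    (S : ℕ → Set ℂ)
    (hS : ∀ k, S k = {z : ℂ | ‖Q 0 (M k) z‖ ≤ 2})
    (E : Set ℂ) (hE : E = ⋂ k, ⋂ (_ : 1 ≤ k), S k) :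
    ∀ z₀ ∈ E, ∀ m : ℕ, 1 < ‖Q 0 m z₀‖ :=
  stmt_1_general c msq hc M hMs P hP1 hP2 Q hQs S hS E hE
end

section
/- For all integers 0 ≤ m < n and every z ∈ Q_m(E), where E = ⋂_{k≥1} S_k, the derivative of the composition satisfies |Q'_{m,n}(z)| ≥ 2^(n−m). In particular, for z ∈ E and every k ≥ 1, |Q'_{M_k}(z)| ≥ 2^(M_k). -/
open Complex Metric Set Filter

/-!
Every map `P n` is `z ↦ z ^ 2 + a` for some constant `a`, so by the chain rule `Q'_{m,n}(z)` is
the product of the factors `2 Q_{m,j}(z)` for `m ≤ j < n`, and it suffices to know that the orbit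
of a point of `E` never enters the open unit disc. If it did, at time `j` say, it would stay there
under pure squaring until the next time `M k`, where adding `c k` with `‖c k‖ > 4` throws it
outside `D̄(0,2)`, contradicting membership in `S k`.
-/

theorem StrictMono.exists_gap_above {M : ℕ → ℕ} (hM : StrictMono M) (j : ℕ) :
    ∃ k, 1 ≤ k ∧ j < M k ∧ ∀ k', 1 ≤ k' → M k' ∉ Ioo j (M k) := by
  have hex : ∃ k, j < M (k + 1) := ⟨j, (Nat.lt_succ_self j).trans_le hM.le_apply⟩
  refine ⟨Nat.find hex + 1, Nat.le_add_left 1 _, Nat.find_spec hex, fun k' hk' hmem => ?_⟩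
  have hlt : k' - 1 < Nat.find hex := by
    have := hM.lt_iff_lt.1 hmem.2
    omega
  exact Nat.find_min hex hlt (by rw [Nat.sub_add_cancel hk']; exact hmem.1)

section Orbits

variable {P : ℕ → ℂ → ℂ} {Q : ℕ → ℕ → ℂ → ℂ}

theorem orbit_comp_of_le (hQ0 : ∀ n z, Q n n z = z)
    (hQs : ∀ a n z, a ≤ n → Q a (n + 1) z = P (n + 1) (Q a n z))
    {l m n : ℕ} (hlm : l ≤ m) (hmn : m ≤ n) (z : ℂ) : Q m n (Q l m z) = Q l n z := by
  induction n, hmn using Nat.le_induction with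
  | base => exact hQ0 m _
  | succ n hmn ih => rw [hQs m n _ hmn, hQs l n z (hlm.trans hmn), ih]

theorem hasDerivAt_orbit (hQ0 : ∀ n z, Q n n z = z)
    (hQs : ∀ a n z, a ≤ n → Q a (n + 1) z = P (n + 1) (Q a n z))
    (hP : ∀ n w, HasDerivAt (P n) (2 * w) w) {m n : ℕ} (hmn : m ≤ n) (z : ℂ) :
    HasDerivAt (Q m n) (∏ j ∈ Finset.Ico m n, 2 * Q m j z) z := by
  induction n, hmn using Nat.le_induction with
  | base =>
    rw [Finset.Ico_self, Finset.prod_empty, show Q m m = id from funext (hQ0 m)]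
    exact hasDerivAt_id z
  | succ n hmn ih =>
    rw [Finset.prod_Ico_succ_top hmn, mul_comm,
      show Q m (n + 1) = P (n + 1) ∘ Q m n from funext fun x => hQs m n x hmn]
    exact (hP (n + 1) (Q m n z)).comp z ih

theorem two_pow_le_norm_deriv_orbit (hQ0 : ∀ n z, Q n n z = z)
    (hQs : ∀ a n z, a ≤ n → Q a (n + 1) z = P (n + 1) (Q a n z))
    (hP : ∀ n w, HasDerivAt (P n) (2 * w) w) {m n : ℕ} (hmn : m ≤ n) {z : ℂ}
    (hz : ∀ j, m ≤ j → j < n → 1 ≤ ‖Q m j z‖) :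
    (2 : ℝ) ^ (n - m) ≤ ‖deriv (Q m n) z‖ := by
  rw [(hasDerivAt_orbit hQ0 hQs hP hmn z).deriv, norm_prod, ← Nat.card_Ico, ← Finset.prod_const]
  refine Finset.prod_le_prod (fun _ _ => zero_le_two) fun j hj => ?_
  obtain ⟨hmj, hjn⟩ := Finset.mem_Ico.1 hj
  rw [norm_mul, Complex.norm_two]
  linarith [hz j hmj hjn]

theorem norm_orbit_lt_one_of_squaring
    (hQs : ∀ a n z, a ≤ n → Q a (n + 1) z = P (n + 1) (Q a n z))
    {j N : ℕ} (hjN : j ≤ N) {w : ℂ} (hw : ‖Q 0 j w‖ < 1)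
    (hsq : ∀ i, j < i → i ≤ N → ∀ z, P i z = z ^ 2) : ‖Q 0 N w‖ < 1 := by
  induction N, hjN using Nat.le_induction with
  | base => exact hw
  | succ N hjN ih =>
    rw [hQs 0 N w N.zero_le, hsq (N + 1) (by omega) le_rfl, norm_pow]
    exact pow_lt_one₀ (norm_nonneg _) (ih fun i hji hiN => hsq i hji (by omega)) two_ne_zero

theorem two_lt_norm_orbit_of_escape
    (hQs : ∀ a n z, a ≤ n → Q a (n + 1) z = P (n + 1) (Q a n z))
    {j N : ℕ} (hjN : j < N) {w : ℂ} (hw : ‖Q 0 j w‖ < 1)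
    (hsq : ∀ i, j < i → i < N → ∀ z, P i z = z ^ 2)
    {a : ℂ} (ha : 3 ≤ ‖a‖) (hN : ∀ z, P N z = z ^ 2 + a) : 2 < ‖Q 0 N w‖ := by
  obtain ⟨N, rfl⟩ : ∃ N', N = N' + 1 := ⟨N - 1, by omega⟩
  set q := Q 0 N w
  have hq : ‖q‖ < 1 :=
    norm_orbit_lt_one_of_squaring hQs (by omega) hw fun i hji hiN => hsq i hji (by omega)
  have hq2 : ‖q ^ 2‖ < 1 := by
    rw [norm_pow]
    exact pow_lt_one₀ (norm_nonneg _) hq two_ne_zero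
  have hsub : ‖a‖ ≤ ‖q ^ 2 + a‖ + ‖q ^ 2‖ := norm_le_add_norm_add' (q ^ 2) a
  rw [hQs 0 N w N.zero_le, hN]
  linarith

theorem one_le_norm_orbit {c : ℕ → ℂ} {M : ℕ → ℕ} (hM : StrictMono M)
    (hc : ∀ k, 1 ≤ k → 3 ≤ ‖c k‖)
    (hP1 : ∀ k, 1 ≤ k → ∀ z, P (M k) z = z ^ 2 + c k)
    (hP2 : ∀ n, (∀ k, 1 ≤ k → M k ≠ n) → ∀ z, P n z = z ^ 2)
    (hQs : ∀ a n z, a ≤ n → Q a (n + 1) z = P (n + 1) (Q a n z))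
    {w : ℂ} (hw : ∀ k, 1 ≤ k → ‖Q 0 (M k) w‖ ≤ 2) (j : ℕ) : 1 ≤ ‖Q 0 j w‖ := by
  by_contra! h
  obtain ⟨k, hk, hjk, hgap⟩ := hM.exists_gap_above j
  have hsq : ∀ i, j < i → i < M k → ∀ z, P i z = z ^ 2 :=
    fun i hji hik => hP2 i fun k' hk' he => hgap k' hk' (he ▸ ⟨hji, hik⟩)
  exact (hw k hk).not_gt (two_lt_norm_orbit_of_escape hQs hjk h hsq (hc k hk) (hP1 k hk))

end Orbits

theorem hasDerivAt_of_eq_sq_add {P : ℕ → ℂ → ℂ} {c : ℕ → ℂ} {M : ℕ → ℕ}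
    (hP1 : ∀ k, 1 ≤ k → ∀ z, P (M k) z = z ^ 2 + c k)
    (hP2 : ∀ n, (∀ k, 1 ≤ k → M k ≠ n) → ∀ z, P n z = z ^ 2) (n : ℕ) (w : ℂ) :
    HasDerivAt (P n) (2 * w) w := by
  obtain ⟨a, ha⟩ : ∃ a, P n = fun z => z ^ 2 + a := by
    by_cases h : ∃ k, 1 ≤ k ∧ M k = n
    · obtain ⟨k, hk, rfl⟩ := h
      exact ⟨c k, funext (hP1 k hk)⟩
    · push Not at h
      exact ⟨0, funext fun z => by rw [hP2 n h, add_zero]⟩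
  rw [ha]
  simpa using (hasDerivAt_pow 2 w).add_const a

theorem stmt_2_general
    (c : ℕ → ℂ) (msq : ℕ → ℕ)
    (hc : ∀ k, 1 ≤ k → 4 < ‖c k‖)
    (M : ℕ → ℕ)
    (hMs : ∀ k, M (k + 1) = M k + (msq (k + 1) + 1))
    (P : ℕ → ℂ → ℂ)
    (hP1 : ∀ k, 1 ≤ k → ∀ z, P (M k) z = z ^ 2 + c k)
    (hP2 : ∀ n, (∀ k, 1 ≤ k → M k ≠ n) → ∀ z, P n z = z ^ 2)
    (Q : ℕ → ℕ → ℂ → ℂ)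
    (hQ0 : ∀ n z, Q n n z = z)
    (hQs : ∀ a n z, a ≤ n → Q a (n + 1) z = P (n + 1) (Q a n z))
    (S : ℕ → Set ℂ)
    (hS : ∀ k, S k = {z : ℂ | ‖Q 0 (M k) z‖ ≤ 2})
    (E : Set ℂ) (hE : E = ⋂ k, ⋂ (_ : 1 ≤ k), S k) :
    (∀ m n : ℕ, m < n → ∀ z ∈ Q 0 m '' E,
        (2 : ℝ) ^ (n - m) ≤ ‖deriv (Q m n) z‖) ∧
      (∀ z ∈ E, ∀ k, 1 ≤ k →
        (2 : ℝ) ^ (M k) ≤ ‖deriv (Q 0 (M k)) z‖) := by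
  have hM : StrictMono M := strictMono_nat_of_lt_succ fun k => by rw [hMs]; omega
  have hP := hasDerivAt_of_eq_sq_add hP1 hP2
  have horbit : ∀ w ∈ E, ∀ j, 1 ≤ ‖Q 0 j w‖ := by
    intro w hw
    refine one_le_norm_orbit hM (fun k hk => (hc k hk).le.trans' (by norm_num)) hP1 hP2 hQs
      fun k hk => ?_
    have hwk := mem_iInter₂.1 (hE ▸ hw) k hk
    rwa [hS] at hwk
  have hderiv : ∀ m n : ℕ, m < n → ∀ z ∈ Q 0 m '' E, (2 : ℝ) ^ (n - m) ≤ ‖deriv (Q m n) z‖ := by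
    rintro m n hmn _ ⟨w, hw, rfl⟩
    refine two_pow_le_norm_deriv_orbit hQ0 hQs hP hmn.le fun j hmj _ => ?_
    rw [orbit_comp_of_le hQ0 hQs m.zero_le hmj]
    exact horbit w hw j
  refine ⟨hderiv, fun z hz k hk => ?_⟩
  simpa using hderiv 0 (M k) ((M 0).zero_le.trans_lt (hM hk)) z ⟨z, hz, hQ0 0 z⟩

/-- For all 0 ≤ m < n and every z ∈ Q_m(E), |Q'_{m,n}(z)| ≥ 2^(n−m).
In particular, for z ∈ E and every k ≥ 1, |Q'_{M_k}(z)| ≥ 2^(M_k). -/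
theorem stmt_2
    (c : ℕ → ℂ) (msq : ℕ → ℕ)
    (hc : ∀ k, 1 ≤ k → 4 < ‖c k‖)
    (hmsq : ∀ k, 1 ≤ k → 1 ≤ msq k)
    (hinv : ∀ k, 1 ≤ k → Real.sqrt (‖c k‖) + 1 < (2 : ℝ) ^ 2 ^ msq k)
    (M : ℕ → ℕ) (hM0 : M 0 = 0)
    (hMs : ∀ k, M (k + 1) = M k + (msq (k + 1) + 1))
    (P : ℕ → ℂ → ℂ)
    (hP1 : ∀ k, 1 ≤ k → ∀ z, P (M k) z = z ^ 2 + c k)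
    (hP2 : ∀ n, (∀ k, 1 ≤ k → M k ≠ n) → ∀ z, P n z = z ^ 2)
    (Q : ℕ → ℕ → ℂ → ℂ)
    (hQ0 : ∀ n z, Q n n z = z)
    (hQs : ∀ a n z, a ≤ n → Q a (n + 1) z = P (n + 1) (Q a n z))
    (S : ℕ → Set ℂ)
    (hS : ∀ k, S k = {z : ℂ | ‖Q 0 (M k) z‖ ≤ 2})
    (E : Set ℂ) (hE : E = ⋂ k, ⋂ (_ : 1 ≤ k), S k) :
    (∀ m n : ℕ, m < n → ∀ z ∈ Q 0 m '' E,
        (2 : ℝ) ^ (n - m) ≤ ‖deriv (Q m n) z‖) ∧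
      (∀ z ∈ E, ∀ k, 1 ≤ k →
        (2 : ℝ) ^ (M k) ≤ ‖deriv (Q 0 (M k)) z‖) :=
  stmt_2_general c msq hc M hMs P hP1 hP2 Q hQ0 hQs S hS E hE
end

section
/- Let c ∈ ℂ with |c| > 4 and let s ∈ ℂ satisfy s² = −c. Then every z ∈ ℂ with |z² + c| ≤ 2 satisfies |z − s| ≤ 1 or |z + s| ≤ 1; that is, the preimage of the closed disc D̄(0,2) under z ↦ z² + c is contained in D̄(s,1) ∪ D̄(−s,1). -/
/-!
Since `s² = -c`, the map factors as `z² + c = (z - s)(z + s)`, so the two distances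
`a = ‖z - s‖`, `b = ‖z + s‖` satisfy `a b ≤ 2`, while the triangle inequality gives
`a + b ≥ 2‖s‖ > 4`. If both exceeded `1`, then `(a - 1)(b - 1) > 0` would force
`a + b < a b + 1 ≤ 3`.
-/

lemma le_one_or_le_one_of_mul_le_of_lt_add {a b r : ℝ} (hab : a * b ≤ r) (hr : r + 1 < a + b) :
    a ≤ 1 ∨ b ≤ 1 := by
  by_contra! h
  nlinarith [mul_pos (sub_pos.2 h.1) (sub_pos.2 h.2)]

lemma two_mul_norm_le_norm_sub_add_norm_add {E : Type*} [SeminormedAddCommGroup E]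
    [NormedSpace ℝ E] (z s : E) : 2 * ‖s‖ ≤ ‖z - s‖ + ‖z + s‖ :=
  calc 2 * ‖s‖ = ‖(z + s) - (z - s)‖ := by
        rw [add_sub_sub_cancel, ← two_smul ℝ, norm_smul, Real.norm_two]
    _ ≤ ‖z + s‖ + ‖z - s‖ := norm_sub_le _ _
    _ = ‖z - s‖ + ‖z + s‖ := add_comm _ _

lemma norm_sub_le_one_or_norm_add_le_one_of_norm_sq_sub_sq_le {𝕜 : Type*} [RCLike 𝕜]
    {z s : 𝕜} {r : ℝ} (hz : ‖z ^ 2 - s ^ 2‖ ≤ r) (hs : r + 1 < 2 * ‖s‖) :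
    ‖z - s‖ ≤ 1 ∨ ‖z + s‖ ≤ 1 := by
  refine le_one_or_le_one_of_mul_le_of_lt_add (r := r) ?_ ?_
  · rwa [← norm_mul, mul_comm, ← sq_sub_sq]
  · linarith [two_mul_norm_le_norm_sub_add_norm_add z s]

/-- If |c| > 4 and s² = −c, then the preimage of D̄(0,2) under
z ↦ z² + c is contained in D̄(s,1) ∪ D̄(−s,1). -/
theorem stmt_4
    (c s : ℂ) (hc : 4 < ‖c‖) (hs : s ^ 2 = -c) :
    ∀ z : ℂ, ‖z ^ 2 + c‖ ≤ 2 →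
      ‖z - s‖ ≤ 1 ∨ ‖z + s‖ ≤ 1 := by
  intro z hz
  have hs_norm : 2 < ‖s‖ := by
    have : ‖s‖ ^ 2 = ‖c‖ := by rw [← norm_pow, hs, norm_neg]
    nlinarith [norm_nonneg s]
  refine norm_sub_le_one_or_norm_add_le_one_of_norm_sq_sub_sq_le (r := 2) ?_ (by linarith)
  rwa [hs, sub_neg_eq_add]
end

section
/- For every k ≥ 1, the survival sets satisfy S_{k+1} ⊆ S_k ⊆ D̄(0,2) ∖ D̄(0,1) (so every z ∈ S_k has 1 < |z| ≤ 2), and moreover Q_{M_k}(S_{k+1}) = Q_{M_k,M_{k+1}}^{-1}(D̄(0,2)) ⊆ D̄(0,2) ∖ D̄(0,1). -/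
open Complex Metric Set Filter

/-!
Between two consecutive perturbation times `M k` and `M (k+1)` the composite map is the single
polynomial `z ↦ z ^ 2 ^ (m+1) + c` with `m = msq (k+1)`. The choice `√‖c‖ + 1 < 2 ^ 2 ^ m`
makes this block map send `{‖z‖ > 2}` into itself, while `‖c‖ > 4` makes it send the unit disc
into `{‖z‖ > 2}`. Hence a point whose orbit is still in the disc of radius 2 at a later block
time lies in the annulus `1 < ‖z‖ ≤ 2`, and survival sets decrease. The image statement holds
because every `P n` is onto `ℂ`, so `Q 0 (M k)` is onto.
-/

theorem add_two_lt_sq_of_sqrt_add_one_lt {x y : ℝ} (hx : 1 ≤ x) (h : √x + 1 < y) :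
    x + 2 < y ^ 2 := by
  have hsqrt : 1 ≤ √x := Real.one_le_sqrt.mpr hx
  nlinarith [Real.sq_sqrt (zero_le_one.trans hx)]

section Escape

variable {𝕜 : Type*} [NormedDivisionRing 𝕜] {z c : 𝕜} {N : ℕ}

theorem two_lt_norm_pow_add_of_two_lt_norm (hz : 2 < ‖z‖) (hN : N ≠ 0)
    (hc : ‖c‖ + 2 ≤ 2 ^ N) : 2 < ‖z ^ N + c‖ := by
  have hpow : (2 : ℝ) ^ N < ‖z‖ ^ N := pow_lt_pow_left₀ hz zero_le_two hN
  have := norm_le_add_norm_add (z ^ N) c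
  rw [norm_pow] at this
  linarith

theorem two_lt_norm_pow_add_of_norm_le_one (hz : ‖z‖ ≤ 1) (hc : 3 < ‖c‖) :
    2 < ‖z ^ N + c‖ := by
  have hpow : ‖z‖ ^ N ≤ 1 := pow_le_one₀ (norm_nonneg z) hz
  have := norm_le_add_norm_add' (z ^ N) c
  rw [norm_pow] at this
  linarith

end Escape

/-! `Q a n` is the evolution from time `a` to time `n` of the non-autonomous system `P`. -/

section EvolutionFamily

variable {α : Type*} {P : ℕ → α → α} {Q : ℕ → ℕ → α → α}

theorem evolution_comp (hQ0 : ∀ n z, Q n n z = z)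
    (hQs : ∀ a n z, a ≤ n → Q a (n + 1) z = P (n + 1) (Q a n z))
    {a m n : ℕ} (ham : a ≤ m) (hmn : m ≤ n) (z : α) : Q a n z = Q m n (Q a m z) := by
  induction n, hmn using Nat.le_induction with
  | base => rw [hQ0]
  | succ n hmn ih => rw [hQs a n z (ham.trans hmn), hQs m n _ hmn, ih]

theorem evolution_surjective (hQ0 : ∀ n z, Q n n z = z)
    (hQs : ∀ a n z, a ≤ n → Q a (n + 1) z = P (n + 1) (Q a n z))
    (hP : ∀ n, Function.Surjective (P n)) {a n : ℕ} (han : a ≤ n) :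
    Function.Surjective (Q a n) := by
  induction n, han using Nat.le_induction with
  | base => exact fun w => ⟨w, hQ0 a w⟩
  | succ n han ih =>
    rw [show Q a (n + 1) = P (n + 1) ∘ Q a n from funext fun z => hQs a n z han]
    exact (hP (n + 1)).comp ih

theorem evolution_eq_iterate (hQ0 : ∀ n z, Q n n z = z)
    (hQs : ∀ a n z, a ≤ n → Q a (n + 1) z = P (n + 1) (Q a n z))
    {f : α → α} {a j : ℕ} (hP : ∀ i, a < i → i ≤ a + j → P i = f) :
    Q a (a + j) = f^[j] := by
  induction j with
  | zero => exact funext (hQ0 a)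
  | succ j ih =>
    funext z
    rw [← add_assoc, hQs a (a + j) z (Nat.le_add_right a j),
      ih fun i hai hij => hP i hai (by omega), hP (a + j + 1) (by omega) (by omega),
      Function.iterate_succ_apply']

theorem evolution_image_preimage (hQ0 : ∀ n z, Q n n z = z)
    (hQs : ∀ a n z, a ≤ n → Q a (n + 1) z = P (n + 1) (Q a n z))
    (hP : ∀ n, Function.Surjective (P n)) {a m n : ℕ} (ham : a ≤ m) (hmn : m ≤ n)
    (T : Set α) : Q a m '' (Q a n ⁻¹' T) = Q m n ⁻¹' T := by
  rw [show Q a n = Q m n ∘ Q a m from funext (evolution_comp hQ0 hQs ham hmn), preimage_comp,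
    image_preimage_eq _ (evolution_surjective hQ0 hQs hP ham)]

variable {M : ℕ → ℕ} {T : Set α}

theorem evolution_mapsTo (hQ0 : ∀ n z, Q n n z = z)
    (hQs : ∀ a n z, a ≤ n → Q a (n + 1) z = P (n + 1) (Q a n z))
    (hM : Monotone M) {s : Set α} (hs : ∀ k, MapsTo (Q (M k) (M (k + 1))) s s)
    {j i : ℕ} (hji : j ≤ i) : MapsTo (Q (M j) (M i)) s s := by
  induction i, hji using Nat.le_induction with
  | base => intro z hz; rwa [hQ0]
  | succ i hji ih =>
    intro z hz
    rw [evolution_comp hQ0 hQs (hM hji) (hM i.le_succ)]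
    exact hs i (ih hz)

theorem evolution_preimage_subset_preimage_of_le (hQ0 : ∀ n z, Q n n z = z)
    (hQs : ∀ a n z, a ≤ n → Q a (n + 1) z = P (n + 1) (Q a n z))
    (hM : Monotone M) (hT : ∀ k, MapsTo (Q (M k) (M (k + 1))) Tᶜ Tᶜ)
    {a i i' : ℕ} (hai : a ≤ M i) (hii' : i ≤ i') :
    Q a (M i') ⁻¹' T ⊆ Q a (M i) ⁻¹' T := by
  intro z hz
  by_contra hout
  rw [mem_preimage, evolution_comp hQ0 hQs hai (hM hii')] at hz
  exact evolution_mapsTo hQ0 hQs hM hT hii' hout hz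

theorem evolution_preimage_subset_diff (hQ0 : ∀ n z, Q n n z = z)
    (hQs : ∀ a n z, a ≤ n → Q a (n + 1) z = P (n + 1) (Q a n z))
    (hM : Monotone M) {B : Set α} (hT : ∀ k, MapsTo (Q (M k) (M (k + 1))) Tᶜ Tᶜ)
    (hB : ∀ k, MapsTo (Q (M k) (M (k + 1))) B Tᶜ) {j i : ℕ} (hji : j < i) :
    Q (M j) (M i) ⁻¹' T ⊆ T \ B := by
  intro z hz
  refine ⟨not_not.mp fun hzT => evolution_mapsTo hQ0 hQs hM hT hji.le hzT hz, fun hzB => ?_⟩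
  rw [mem_preimage, evolution_comp hQ0 hQs (hM j.le_succ) (hM hji)] at hz
  exact evolution_mapsTo hQ0 hQs hM hT hji (hB j hzB) hz

end EvolutionFamily

section QuadraticBlocks

variable {c : ℕ → ℂ} {msq M : ℕ → ℕ} {P : ℕ → ℂ → ℂ} {Q : ℕ → ℕ → ℂ → ℂ}

theorem strictMono_of_succ_eq_add_succ (hMs : ∀ k, M (k + 1) = M k + (msq (k + 1) + 1)) :
    StrictMono M :=
  strictMono_nat_of_lt_succ fun k => by rw [hMs k]; omega

theorem sq_add_surjective (c : ℂ) : Function.Surjective fun z : ℂ => z ^ 2 + c := fun w =>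
  (IsAlgClosed.exists_pow_nat_eq (w - c) two_pos).imp fun s hs => by simp [hs]

theorem surjective_of_eq_sq_add (hP1 : ∀ k, 1 ≤ k → ∀ z, P (M k) z = z ^ 2 + c k)
    (hP2 : ∀ n, (∀ k, 1 ≤ k → M k ≠ n) → ∀ z, P n z = z ^ 2) (n : ℕ) :
    Function.Surjective (P n) := by
  by_cases h : ∃ k, 1 ≤ k ∧ M k = n
  · obtain ⟨k, hk, rfl⟩ := h
    rw [show P (M k) = _ from funext (hP1 k hk)]
    exact sq_add_surjective (c k)
  · have hsq : P n = (· ^ 2) := funext (hP2 n fun k hk hkn => h ⟨k, hk, hkn⟩)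
    simpa [hsq] using sq_add_surjective 0

theorem block_evolution_eq (hQ0 : ∀ n z, Q n n z = z)
    (hQs : ∀ a n z, a ≤ n → Q a (n + 1) z = P (n + 1) (Q a n z))
    (hMs : ∀ k, M (k + 1) = M k + (msq (k + 1) + 1))
    (hP1 : ∀ k, 1 ≤ k → ∀ z, P (M k) z = z ^ 2 + c k)
    (hP2 : ∀ n, (∀ k, 1 ≤ k → M k ≠ n) → ∀ z, P n z = z ^ 2) (k : ℕ) (z : ℂ) :
    Q (M k) (M (k + 1)) z = z ^ 2 ^ (msq (k + 1) + 1) + c (k + 1) := by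
  have hM := strictMono_of_succ_eq_add_succ hMs
  have hsq : ∀ i, M k < i → i ≤ M k + msq (k + 1) → P i = (· ^ 2) := by
    intro i hki hik
    refine funext (hP2 i fun l _ hl => ?_)
    rcases le_or_gt l k with hlk | hkl
    · have := hM.monotone hlk; omega
    · have := hM.monotone (Nat.succ_le_of_lt hkl); rw [hMs] at this; omega
  have hsucc : M (k + 1) = M k + msq (k + 1) + 1 := by rw [hMs]; ring
  rw [hsucc, hQs _ _ _ (Nat.le_add_right _ _), evolution_eq_iterate hQ0 hQs hsq, pow_iterate,
    ← hsucc, hP1 (k + 1) k.succ_pos, pow_succ 2, pow_mul]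

variable (hblock : ∀ k z, Q (M k) (M (k + 1)) z = z ^ 2 ^ (msq (k + 1) + 1) + c (k + 1))
include hblock

theorem block_mapsTo_compl_closedBall (hc : ∀ k, 1 ≤ k → 4 < ‖c k‖)
    (hinv : ∀ k, 1 ≤ k → Real.sqrt (‖c k‖) + 1 < (2 : ℝ) ^ 2 ^ msq k) (k : ℕ) :
    MapsTo (Q (M k) (M (k + 1))) (closedBall 0 2)ᶜ (closedBall 0 2)ᶜ := by
  intro z hz
  simp only [mem_compl_iff, mem_closedBall_zero_iff, not_le] at hz ⊢
  rw [hblock]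
  refine two_lt_norm_pow_add_of_two_lt_norm hz (by positivity) ?_
  rw [pow_succ 2, pow_mul]
  exact (add_two_lt_sq_of_sqrt_add_one_lt (by linarith [hc (k + 1) k.succ_pos])
    (hinv (k + 1) k.succ_pos)).le

theorem block_mapsTo_closedBall_one (hc : ∀ k, 1 ≤ k → 4 < ‖c k‖) (k : ℕ) :
    MapsTo (Q (M k) (M (k + 1))) (closedBall 0 1) (closedBall 0 2)ᶜ := by
  intro z hz
  simp only [mem_compl_iff, mem_closedBall_zero_iff, not_le] at hz ⊢
  rw [hblock]
  exact two_lt_norm_pow_add_of_norm_le_one hz (by linarith [hc (k + 1) k.succ_pos])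

end QuadraticBlocks

theorem stmt_8_general
    (c : ℕ → ℂ) (msq : ℕ → ℕ)
    (hc : ∀ k, 1 ≤ k → 4 < ‖c k‖)
    (hinv : ∀ k, 1 ≤ k → Real.sqrt (‖c k‖) + 1 < (2 : ℝ) ^ 2 ^ msq k)
    (M : ℕ → ℕ) (hM0 : M 0 = 0)
    (hMs : ∀ k, M (k + 1) = M k + (msq (k + 1) + 1))
    (P : ℕ → ℂ → ℂ)
    (hP1 : ∀ k, 1 ≤ k → ∀ z, P (M k) z = z ^ 2 + c k)
    (hP2 : ∀ n, (∀ k, 1 ≤ k → M k ≠ n) → ∀ z, P n z = z ^ 2)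
    (Q : ℕ → ℕ → ℂ → ℂ)
    (hQ0 : ∀ n z, Q n n z = z)
    (hQs : ∀ a n z, a ≤ n → Q a (n + 1) z = P (n + 1) (Q a n z))
    (S : ℕ → Set ℂ)
    (hS : ∀ k, S k = {z : ℂ | ‖Q 0 (M k) z‖ ≤ 2}) :
    ∀ k, 1 ≤ k →
      S (k + 1) ⊆ S k ∧
      S k ⊆ Metric.closedBall (0 : ℂ) 2 \ Metric.closedBall (0 : ℂ) 1 ∧
      Q 0 (M k) '' S (k + 1) = {z : ℂ | ‖Q (M k) (M (k + 1)) z‖ ≤ 2} ∧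
      Q 0 (M k) '' S (k + 1) ⊆
        Metric.closedBall (0 : ℂ) 2 \ Metric.closedBall (0 : ℂ) 1 := by
  intro k hk
  have hM := (strictMono_of_succ_eq_add_succ hMs).monotone
  have hblock := block_evolution_eq hQ0 hQs hMs hP1 hP2
  have hout := block_mapsTo_compl_closedBall hblock hc hinv
  have hin := block_mapsTo_closedBall_one hblock hc
  have hball : ∀ a n, {z : ℂ | ‖Q a n z‖ ≤ 2} = Q a n ⁻¹' closedBall 0 2 := by
    intro a n; ext z; simp
  have hannulus : ∀ {j i}, j < i → Q (M j) (M i) ⁻¹' closedBall 0 2 ⊆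
      closedBall 0 2 \ closedBall 0 1 :=
    evolution_preimage_subset_diff hQ0 hQs hM hout hin
  have himage : Q 0 (M k) '' S (k + 1) = {z : ℂ | ‖Q (M k) (M (k + 1)) z‖ ≤ 2} := by
    rw [hS, hball, hball, evolution_image_preimage hQ0 hQs (surjective_of_eq_sq_add hP1 hP2)
      (Nat.zero_le _) (hM k.le_succ)]
  refine ⟨?_, ?_, himage, ?_⟩
  · rw [hS, hS, hball, hball]
    exact evolution_preimage_subset_preimage_of_le hQ0 hQs hM hout (Nat.zero_le _) k.le_succ
  · rw [hS, hball]
    simpa only [hM0] using hannulus (j := 0) hk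
  · rw [himage, hball]
    exact hannulus k.lt_succ_self

/-- For every k ≥ 1, S_{k+1} ⊆ S_k ⊆ D̄(0,2) ∖ D̄(0,1), and
Q_{M_k}(S_{k+1}) = Q_{M_k,M_{k+1}}^{-1}(D̄(0,2)) ⊆ D̄(0,2) ∖ D̄(0,1). -/
theorem stmt_8
    (c : ℕ → ℂ) (msq : ℕ → ℕ)
    (hc : ∀ k, 1 ≤ k → 4 < ‖c k‖)
    (hmsq : ∀ k, 1 ≤ k → 1 ≤ msq k)
    (hinv : ∀ k, 1 ≤ k → Real.sqrt (‖c k‖) + 1 < (2 : ℝ) ^ 2 ^ msq k)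
    (M : ℕ → ℕ) (hM0 : M 0 = 0)
    (hMs : ∀ k, M (k + 1) = M k + (msq (k + 1) + 1))
    (P : ℕ → ℂ → ℂ)
    (hP1 : ∀ k, 1 ≤ k → ∀ z, P (M k) z = z ^ 2 + c k)
    (hP2 : ∀ n, (∀ k, 1 ≤ k → M k ≠ n) → ∀ z, P n z = z ^ 2)
    (Q : ℕ → ℕ → ℂ → ℂ)
    (hQ0 : ∀ n z, Q n n z = z)
    (hQs : ∀ a n z, a ≤ n → Q a (n + 1) z = P (n + 1) (Q a n z))
    (S : ℕ → Set ℂ)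
    (hS : ∀ k, S k = {z : ℂ | ‖Q 0 (M k) z‖ ≤ 2}) :
    ∀ k, 1 ≤ k →
      S (k + 1) ⊆ S k ∧
      S k ⊆ Metric.closedBall (0 : ℂ) 2 \ Metric.closedBall (0 : ℂ) 1 ∧
      Q 0 (M k) '' S (k + 1) = {z : ℂ | ‖Q (M k) (M (k + 1)) z‖ ≤ 2} ∧
      Q 0 (M k) '' S (k + 1) ⊆
        Metric.closedBall (0 : ℂ) 2 \ Metric.closedBall (0 : ℂ) 1 :=
  stmt_8_general c msq hc hinv M hM0 hMs P hP1 hP2 Q hQ0 hQs S hS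
end

section
/- Let z ∈ E = ⋂_{k≥1} S_k. Then for every open neighbourhood U of z, every strictly increasing sequence (k_j) of positive integers, and every function g : U → ℂ, the sequence of maps (Q_{M_{k_j}}) restricted to U does not converge locally uniformly on U to g. (No subsequence of (Q_{M_k}) is normally convergent on any neighbourhood of a point of E; this holds because |Q_{M_k}(z)| ≤ 2 for all k while |Q'_{M_k}(z)| ≥ 2^(M_k) → ∞.) -/
/-!
By the chain rule, `Q_n'(z) = 2^n ∏_{m<n} Q_m(z)`. At a point `z` of `E` every orbit point
satisfies `|Q_m(z)| ≥ 1`: after step `m` the orbit is only squared until the next perturbation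
`c_k`, and `|Q_{M_k}(z)| ≤ 2 < |c_k| - 2` forces the squared value just before it to have modulus
at least `2`. Hence `|Q_{M_k}'(z)| ≥ 2^{M_k} → ∞`, which is impossible for a locally uniformly
convergent sequence of holomorphic maps, whose derivatives converge as well.
-/

open Filter

theorem one_lt_norm_of_norm_pow_add_le {α : Type*} [NormedDivisionRing α] {u c : α} {r : ℝ}
    {N : ℕ} (hc : r + 1 < ‖c‖) (h : ‖u ^ N + c‖ ≤ r) : 1 < ‖u‖ := by
  have hc_le : ‖c‖ ≤ ‖u ^ N + c‖ + ‖u‖ ^ N := by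
    rw [← norm_pow]
    simpa using norm_sub_le (u ^ N + c) (u ^ N)
  by_contra! hu
  linarith [pow_le_one₀ (n := N) (norm_nonneg u) hu]

theorem norm_le_norm_mul_prod_of_one_le_norm {𝕜 ι : Type*} [NormedField 𝕜] {s : Finset ι}
    {f : ι → 𝕜} (a : 𝕜) (hf : ∀ i ∈ s, 1 ≤ ‖f i‖) : ‖a‖ ≤ ‖a * ∏ i ∈ s, f i‖ := by
  rw [norm_mul, norm_prod]
  exact le_mul_of_one_le_right (norm_nonneg a) (Finset.one_le_prod hf)

theorem eq_pow_two_pow_of_forall_eq_sq {α : Type*} [Monoid α] {P : ℕ → α → α} {q : ℕ → α}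
    (hq : ∀ n, q (n + 1) = P (n + 1) (q n)) {a : ℕ} :
    ∀ i, (∀ m, a < m → m ≤ a + i → ∀ u, P m u = u ^ 2) → q (a + i) = q a ^ 2 ^ i
  | 0, _ => by simp
  | i + 1, hsq => by
    rw [← add_assoc, hq, hsq _ (by omega) (by omega),
      eq_pow_two_pow_of_forall_eq_sq hq i fun m ha hm => hsq m ha (by omega), ← pow_mul, ← pow_succ]

theorem hasDerivAt_of_forall_succ_eq_sq_add {𝕜 : Type*} [NontriviallyNormedField 𝕜]
    {F : ℕ → 𝕜 → 𝕜} {a : ℕ → 𝕜} (h0 : ∀ w, F 0 w = w)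
    (hF : ∀ n w, F (n + 1) w = F n w ^ 2 + a (n + 1)) :
    ∀ n w, HasDerivAt (F n) (2 ^ n * ∏ m ∈ Finset.range n, F m w) w
  | 0, w => by
    rw [show F 0 = id from funext h0]
    simpa using hasDerivAt_id w
  | n + 1, w => by
    rw [show F (n + 1) = fun w => F n w ^ 2 + a (n + 1) from funext (hF n)]
    refine (((hasDerivAt_of_forall_succ_eq_sq_add h0 hF n w).pow 2).add_const _).congr_deriv ?_
    rw [Finset.prod_range_succ]
    push_cast
    ring

theorem not_tendstoLocallyUniformlyOn_of_tendsto_norm_deriv {ι : Type*} {l : Filter ι} [l.NeBot]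
    {F : ι → ℂ → ℂ} {f : ℂ → ℂ} {U : Set ℂ} {z : ℂ}
    (hF : ∀ᶠ i in l, DifferentiableOn ℂ (F i) U) (hU : IsOpen U) (hz : z ∈ U)
    (h : Tendsto (fun i => ‖deriv (F i) z‖) l atTop) : ¬ TendstoLocallyUniformlyOn F f l U :=
  fun hf => not_tendsto_atTop_of_tendsto_nhds ((hf.deriv hF hU).tendsto_at hz).norm h

theorem one_le_norm_of_forall_norm_le_two {c : ℕ → ℂ} {M : ℕ → ℕ} {P : ℕ → ℂ → ℂ} {q : ℕ → ℂ}
    (hc : ∀ k, 1 ≤ k → 4 < ‖c k‖) (hM0 : M 0 = 0) (hM : StrictMono M)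
    (hP1 : ∀ k, 1 ≤ k → ∀ z, P (M k) z = z ^ 2 + c k)
    (hP2 : ∀ n, (∀ k, 1 ≤ k → M k ≠ n) → ∀ z, P n z = z ^ 2)
    (hq : ∀ n, q (n + 1) = P (n + 1) (q n)) (hbound : ∀ k, 1 ≤ k → ‖q (M k)‖ ≤ 2) (n : ℕ) :
    1 ≤ ‖q n‖ := by
  obtain ⟨k, hkn, hnk⟩ :=
    hM.exists_between_of_tendsto_atTop hM.tendsto_atTop (x := n + 1) (by omega)
  obtain ⟨d, hd⟩ : ∃ d, M (k + 1) = n + d + 1 := ⟨M (k + 1) - n - 1, by omega⟩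
  have hsq : ∀ m, n < m → m ≤ n + d → ∀ u, P m u = u ^ 2 := fun m hnm hmd =>
    hP2 m fun k' _ hk' => by
      have := hM.lt_iff_lt.mp (show M k < M k' by omega)
      have := hM.lt_iff_lt.mp (show M k' < M (k + 1) by omega)
      omega
  have hstep : q (M (k + 1)) = q n ^ 2 ^ (d + 1) + c (k + 1) := by
    rw [hd, hq, ← hd, hP1 (k + 1) (by omega), eq_pow_two_pow_of_forall_eq_sq hq d hsq, ← pow_mul,
      ← pow_succ]
  refine (one_lt_norm_of_norm_pow_add_le (r := 2) ?_ (hstep ▸ hbound (k + 1) (by omega))).le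
  linarith [hc (k + 1) (by omega)]

theorem stmt_11_general
    (c : ℕ → ℂ) (msq : ℕ → ℕ)
    (hc : ∀ k, 1 ≤ k → 4 < ‖c k‖)
    (M : ℕ → ℕ) (hM0 : M 0 = 0)
    (hMs : ∀ k, M (k + 1) = M k + (msq (k + 1) + 1))
    (P : ℕ → ℂ → ℂ)
    (hP1 : ∀ k, 1 ≤ k → ∀ z, P (M k) z = z ^ 2 + c k)
    (hP2 : ∀ n, (∀ k, 1 ≤ k → M k ≠ n) → ∀ z, P n z = z ^ 2)
    (Q : ℕ → ℕ → ℂ → ℂ)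
    (hQ0 : ∀ n z, Q n n z = z)
    (hQs : ∀ a n z, a ≤ n → Q a (n + 1) z = P (n + 1) (Q a n z))
    (S : ℕ → Set ℂ)
    (hS : ∀ k, S k = {z : ℂ | ‖Q 0 (M k) z‖ ≤ 2})
    (E : Set ℂ) (hE : E = ⋂ k, ⋂ (_ : 1 ≤ k), S k) :
    ∀ z ∈ E, ∀ U : Set ℂ, IsOpen U → z ∈ U →
      ∀ kseq : ℕ → ℕ, StrictMono kseq → (∀ j, 1 ≤ kseq j) →
        ∀ g : ℂ → ℂ,
          ¬ TendstoLocallyUniformlyOn (fun j => Q 0 (M (kseq j))) g atTop U := by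
  intro z hzE U hU hzU kseq hks _ g
  have hM : StrictMono M := strictMono_nat_of_lt_succ fun k => by rw [hMs]; omega
  have hP : ∀ n u, P n u = u ^ 2 + P n 0 := by
    intro n u
    by_cases hn : ∃ k, 1 ≤ k ∧ M k = n
    · obtain ⟨k, hk, rfl⟩ := hn
      simp [hP1 k hk]
    · simp [hP2 n fun k hk hkn => hn ⟨k, hk, hkn⟩]
  have hderiv := hasDerivAt_of_forall_succ_eq_sq_add (a := fun n => P n 0) (hQ0 0)
    (fun n w => (hQs 0 n w n.zero_le).trans (hP _ _))
  have hzS : ∀ k, 1 ≤ k → ‖Q 0 (M k) z‖ ≤ 2 := by simpa [hE, hS] using hzE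
  have horbit := one_le_norm_of_forall_norm_le_two (q := fun n => Q 0 n z) hc hM0 hM hP1 hP2
    (fun n => hQs 0 n z n.zero_le) hzS
  refine not_tendstoLocallyUniformlyOn_of_tendsto_norm_deriv
    (Eventually.of_forall fun j w _ => (hderiv _ w).differentiableAt.differentiableWithinAt)
    hU hzU (tendsto_atTop_mono (fun j => ?_)
      ((tendsto_pow_atTop_atTop_of_one_lt one_lt_two).comp (hM.comp hks).tendsto_atTop))
  rw [(hderiv _ z).deriv]
  simpa using norm_le_norm_mul_prod_of_one_le_norm ((2 : ℂ) ^ M (kseq j)) fun m _ => horbit m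

/-- For z ∈ E, no subsequence of (Q_{M_k}) converges locally
uniformly on any neighbourhood of z. -/
theorem stmt_11
    (c : ℕ → ℂ) (msq : ℕ → ℕ)
    (hc : ∀ k, 1 ≤ k → 4 < ‖c k‖)
    (hmsq : ∀ k, 1 ≤ k → 1 ≤ msq k)
    (hinv : ∀ k, 1 ≤ k → Real.sqrt (‖c k‖) + 1 < (2 : ℝ) ^ 2 ^ msq k)
    (M : ℕ → ℕ) (hM0 : M 0 = 0)
    (hMs : ∀ k, M (k + 1) = M k + (msq (k + 1) + 1))
    (P : ℕ → ℂ → ℂ)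
    (hP1 : ∀ k, 1 ≤ k → ∀ z, P (M k) z = z ^ 2 + c k)
    (hP2 : ∀ n, (∀ k, 1 ≤ k → M k ≠ n) → ∀ z, P n z = z ^ 2)
    (Q : ℕ → ℕ → ℂ → ℂ)
    (hQ0 : ∀ n z, Q n n z = z)
    (hQs : ∀ a n z, a ≤ n → Q a (n + 1) z = P (n + 1) (Q a n z))
    (S : ℕ → Set ℂ)
    (hS : ∀ k, S k = {z : ℂ | ‖Q 0 (M k) z‖ ≤ 2})
    (E : Set ℂ) (hE : E = ⋂ k, ⋂ (_ : 1 ≤ k), S k) :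
    ∀ z ∈ E, ∀ U : Set ℂ, IsOpen U → z ∈ U →
      ∀ kseq : ℕ → ℕ, StrictMono kseq → (∀ j, 1 ≤ kseq j) →
        ∀ g : ℂ → ℂ,
          ¬ TendstoLocallyUniformlyOn (fun j => Q 0 (M (kseq j))) g atTop U :=
  stmt_11_general c msq hc M hM0 hMs P hP1 hP2 Q hQ0 hQs S hS E hE
end

section
/- For every k ≥ 1, each connected component of the survival set S_k has Euclidean diameter at most 4·η^k, where η = 2^(−11/4) < 1. -/
/-!
On the `j`-th block of indices the composite `Q_{M_{j-1}, M_j}` is `z ↦ z ^ d + c_j` with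
`d = 2 ^ (m_j + 1) ≥ 4`, and the size condition on `m_j` says `2 + |c_j| ≤ 2 ^ d`, so a point whose
image under a block lies in `D̄(0,2)` lies in `D̄(0,2)` itself. Hence all intermediate images of a
component of `S_k` stay in `D̄(0,2)`. There `z ^ d ∈ D̄(-c_j, 2)`, and after a rotation this disc
lies in the half-plane `Re w > 2`, on which the principal branch of `w ^ (1/d)` is
`2 ^ (1/d - 1) / d`-Lipschitz; for `d ≥ 4` this constant is at most `2 ^ (1/4 - 1) / 4 = η`.
On a connected set this branch inverts `z ↦ z ^ d` up to one fixed root of unity, so each block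
contracts distances by the factor `η`; the last image has diameter at most `4`.
-/

open Complex Metric Set

theorem IsPreconnected.constant_of_pow_eq {α R : Type*} [TopologicalSpace α] [CommRing R]
    [IsDomain R] [TopologicalSpace R] [T1Space R] {S : Set α} (hS : IsPreconnected S)
    {f : α → R} (hf : ContinuousOn f S) {d : ℕ} (hd : d ≠ 0) {a : R}
    (hpow : ∀ x ∈ S, f x ^ d = a) {x y : α} (hx : x ∈ S) (hy : y ∈ S) : f x = f y :=
  hS.constant_of_mapsTo (Polynomial.nthRootsFinset d a).finite_toSet.isDiscrete hf
    (fun z hz => (Polynomial.mem_nthRootsFinset (Nat.pos_of_ne_zero hd) a).2 (hpow z hz)) hx hy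

theorem Complex.norm_cpow_inv_sub_le {d : ℕ} (hd : d ≠ 0) {R : ℝ} (hR : 0 < R) {w₁ w₂ : ℂ}
    (h₁ : R < w₁.re) (h₂ : R < w₂.re) :
    ‖w₁ ^ (d⁻¹ : ℂ) - w₂ ^ (d⁻¹ : ℂ)‖ ≤ R ^ ((d : ℝ)⁻¹ - 1) / d * ‖w₁ - w₂‖ := by
  have hderiv : ∀ w ∈ {w : ℂ | R < w.re}, HasDerivWithinAt (fun w => w ^ (d⁻¹ : ℂ))
      ((d⁻¹ : ℂ) * w ^ ((d⁻¹ : ℂ) - 1)) {w | R < w.re} w := fun w hw =>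
    (hasStrictDerivAt_cpow_const (mem_slitPlane_iff.2 (Or.inl (hR.trans hw)))).hasDerivAt
      |>.hasDerivWithinAt
  have hbound : ∀ w ∈ {w : ℂ | R < w.re},
      ‖(d⁻¹ : ℂ) * w ^ ((d⁻¹ : ℂ) - 1)‖ ≤ R ^ ((d : ℝ)⁻¹ - 1) / d := by
    intro w hw
    have hRw : R ≤ ‖w‖ := hw.out.le.trans (re_le_norm w)
    have hexp : (d : ℝ)⁻¹ - 1 ≤ 0 := by
      have : (1 : ℝ) ≤ d := Nat.one_le_cast.2 (Nat.pos_of_ne_zero hd)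
      linarith [inv_le_one_of_one_le₀ this]
    rw [show (d⁻¹ : ℂ) - 1 = (((d : ℝ)⁻¹ - 1 : ℝ) : ℂ) by push_cast; ring, norm_mul,
      norm_cpow_real, norm_inv, norm_natCast, inv_mul_eq_div]
    exact div_le_div_of_nonneg_right (Real.rpow_le_rpow_of_nonpos hR hRw hexp) d.cast_nonneg
  exact (convex_halfSpace_re_gt R).norm_image_sub_le_of_norm_hasDerivWithin_le hderiv hbound h₂ h₁

theorem IsPreconnected.dist_le_of_re_mul_pow_gt {C : Set ℂ} (hC : IsPreconnected C) {d : ℕ}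
    (hd : d ≠ 0) {a : ℂ} (ha : ‖a‖ = 1) {R : ℝ} (hR : 0 < R)
    (hre : ∀ z ∈ C, R < (a * z ^ d).re) {z₁ z₂ : ℂ} (h₁ : z₁ ∈ C) (h₂ : z₂ ∈ C) :
    dist z₁ z₂ ≤ R ^ ((d : ℝ)⁻¹ - 1) / d * dist (z₁ ^ d) (z₂ ^ d) := by
  set root : ℂ → ℂ := fun z => (a * z ^ d) ^ (d⁻¹ : ℂ)
  have hne : ∀ z ∈ C, z ≠ 0 := by
    rintro z hz rfl
    have := hre 0 hz
    simp only [zero_pow hd, mul_zero, zero_re] at this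
    linarith
  have hcont : ContinuousOn (fun z => root z / z) C := fun z hz => by
    have hroot : ContinuousAt root z :=
      (continuousAt_cpow_const (mem_slitPlane_iff.2 (Or.inl (hR.trans (hre z hz))))).comp
        (f := fun z => a * z ^ d) (by fun_prop)
    exact (hroot.div continuousAt_id (hne z hz)).continuousWithinAt
  have hpow : ∀ z ∈ C, (root z / z) ^ d = a := fun z hz => by
    rw [div_pow, cpow_nat_inv_pow _ hd, mul_div_assoc, div_self (pow_ne_zero _ (hne z hz)),
      mul_one]
  have hconst := hC.constant_of_pow_eq hcont hd hpow h₁ h₂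
  have hunit : ‖root z₁ / z₁‖ = 1 := by
    have := congrArg norm (hpow z₁ h₁)
    rwa [norm_pow, ha, pow_eq_one_iff_of_nonneg (norm_nonneg _) hd] at this
  calc dist z₁ z₂ = ‖root z₁ / z₁ * (z₁ - z₂)‖ := by rw [norm_mul, hunit, one_mul, dist_eq]
    _ = ‖root z₁ - root z₂‖ := by
      rw [mul_sub, div_mul_cancel₀ _ (hne z₁ h₁), hconst, div_mul_cancel₀ _ (hne z₂ h₂)]
    _ ≤ R ^ ((d : ℝ)⁻¹ - 1) / d * ‖a * z₁ ^ d - a * z₂ ^ d‖ :=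
      norm_cpow_inv_sub_le hd hR (hre z₁ h₁) (hre z₂ h₂)
    _ = R ^ ((d : ℝ)⁻¹ - 1) / d * dist (z₁ ^ d) (z₂ ^ d) := by
      rw [← mul_sub, norm_mul, ha, one_mul, dist_eq]

theorem two_rpow_inv_sub_one_div_le {d : ℕ} (hd : 4 ≤ d) :
    (2 : ℝ) ^ ((d : ℝ)⁻¹ - 1) / d ≤ 2 ^ (-(11 : ℝ) / 4) := by
  have hd' : (4 : ℝ) ≤ d := by exact_mod_cast hd
  calc (2 : ℝ) ^ ((d : ℝ)⁻¹ - 1) / d ≤ 2 ^ ((4 : ℝ)⁻¹ - 1) / 4 := by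
        gcongr
        norm_num
    _ = 2 ^ (-(11 : ℝ) / 4) := by
        rw [show (4 : ℝ) = 2 ^ (2 : ℝ) by norm_num, ← Real.rpow_sub two_pos]
        norm_num

theorem IsPreconnected.dist_le_of_mapsTo_pow_add {C : Set ℂ} (hC : IsPreconnected C) {d : ℕ}
    (hd : 4 ≤ d) {c : ℂ} (hc : 4 < ‖c‖) (hmaps : MapsTo (fun z => z ^ d + c) C (closedBall 0 2))
    {z₁ z₂ : ℂ} (h₁ : z₁ ∈ C) (h₂ : z₂ ∈ C) :
    dist z₁ z₂ ≤ 2 ^ (-(11 : ℝ) / 4) * dist (z₁ ^ d + c) (z₂ ^ d + c) := by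
  have hc0 : c ≠ 0 := norm_pos_iff.1 (by linarith)
  -- the rotation `a` takes `-c` to the positive real `‖c‖`
  set a : ℂ := -(‖c‖ / c)
  have ha : ‖a‖ = 1 := by
    rw [norm_neg, norm_div, norm_real, norm_norm, div_self (norm_ne_zero_iff.2 hc0)]
  have hre : ∀ z ∈ C, 2 < (a * z ^ d).re := fun z hz => by
    have hz : ‖z ^ d + c‖ ≤ 2 := mem_closedBall_zero_iff.1 (hmaps hz)
    have hsplit : a * z ^ d = a * (z ^ d + c) + (‖c‖ : ℂ) := by
      simp only [a]; field_simp; ring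
    have hbd : |(a * (z ^ d + c)).re| ≤ 2 :=
      (abs_re_le_norm _).trans (by rwa [norm_mul, ha, one_mul])
    rw [hsplit, add_re, ofReal_re]
    linarith [neg_abs_le (a * (z ^ d + c)).re]
  calc dist z₁ z₂ ≤ 2 ^ ((d : ℝ)⁻¹ - 1) / d * dist (z₁ ^ d) (z₂ ^ d) :=
        hC.dist_le_of_re_mul_pow_gt (by omega) ha two_pos hre h₁ h₂
    _ ≤ 2 ^ (-(11 : ℝ) / 4) * dist (z₁ ^ d + c) (z₂ ^ d + c) := by
        rw [dist_add_right]
        gcongr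
        exact two_rpow_inv_sub_one_div_le hd

theorem norm_le_of_norm_pow_add_le {d : ℕ} (hd : d ≠ 0) {c z : ℂ} {r : ℝ} (hr : 0 ≤ r)
    (hcr : r + ‖c‖ ≤ r ^ d) (h : ‖z ^ d + c‖ ≤ r) : ‖z‖ ≤ r := by
  refine (pow_le_pow_iff_left₀ (norm_nonneg z) hr hd).1 ?_
  calc ‖z‖ ^ d = ‖(z ^ d + c) - c‖ := by rw [add_sub_cancel_right, norm_pow]
    _ ≤ ‖z ^ d + c‖ + ‖c‖ := norm_sub_le _ _
    _ ≤ r + ‖c‖ := by gcongr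
    _ ≤ r ^ d := hcr

theorem two_add_le_two_pow_two_pow_succ {m : ℕ} {x : ℝ} (hx : 1 ≤ x)
    (h : √x + 1 < 2 ^ 2 ^ m) : 2 + x ≤ 2 ^ 2 ^ (m + 1) := by
  have hs : 1 ≤ √x := Real.one_le_sqrt.2 hx
  calc 2 + x ≤ (√x + 1) ^ 2 := by nlinarith [Real.sq_sqrt (zero_le_one.trans hx)]
    _ ≤ (2 ^ 2 ^ m) ^ 2 := by gcongr
    _ = 2 ^ 2 ^ (m + 1) := by rw [← pow_mul, pow_succ]

theorem four_le_two_pow_succ_of_sqrt_add_one_lt {m : ℕ} {x : ℝ} (hx : 4 < x)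
    (h : √x + 1 < 2 ^ 2 ^ m) : 4 ≤ 2 ^ (m + 1) := by
  have hm : m ≠ 0 := by
    rintro rfl
    have : 2 < √x := Real.lt_sqrt (by norm_num) |>.2 (by linarith)
    norm_num at h
    linarith
  calc 4 = 2 ^ 2 := by norm_num
    _ ≤ 2 ^ (m + 1) := Nat.pow_le_pow_right two_pos (by omega)

structure IsBlockComposition {X : Type*} (Φ : ℕ → ℕ → X → X) : Prop where
  zero : ∀ j x, Φ j 0 x = x
  succ : ∀ j k x, Φ j (k + 1) x = Φ (j + 1) k (Φ j 1 x)

namespace IsBlockComposition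

theorem mem_of_apply_mem {X : Type*} {Φ : ℕ → ℕ → X → X} (hΦ : IsBlockComposition Φ)
    {B : Set X} (hB : ∀ j x, Φ j 1 x ∈ B → x ∈ B) : ∀ k j x, Φ j k x ∈ B → x ∈ B
  | 0, j, x, h => by rwa [hΦ.zero] at h
  | k + 1, j, x, h => hB j x (hΦ.mem_of_apply_mem hB k (j + 1) _ (by rwa [← hΦ.succ]))

theorem dist_le_of_mapsTo {X : Type*} [PseudoMetricSpace X] {Φ : ℕ → ℕ → X → X}
    (hΦ : IsBlockComposition Φ) (hcont : ∀ j, Continuous (Φ j 1)) {B : Set X}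
    (hB : ∀ j x, Φ j 1 x ∈ B → x ∈ B) {δ η : ℝ} (hη : 0 ≤ η)
    (hδ : ∀ x ∈ B, ∀ y ∈ B, dist x y ≤ δ)
    (hcontr : ∀ j C, IsPreconnected C → MapsTo (Φ j 1) C B →
      ∀ x ∈ C, ∀ y ∈ C, dist x y ≤ η * dist (Φ j 1 x) (Φ j 1 y)) :
    ∀ k j C, IsPreconnected C → MapsTo (Φ j k) C B → ∀ x ∈ C, ∀ y ∈ C, dist x y ≤ δ * η ^ k
  | 0, j, C, _, hC, x, hx, y, hy => by
    rw [pow_zero, mul_one]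
    exact hδ x (hΦ.zero j x ▸ hC hx) y (hΦ.zero j y ▸ hC hy)
  | k + 1, j, C, hCc, hC, x, hx, y, hy => by
    have hC' : MapsTo (Φ (j + 1) k) (Φ j 1 '' C) B := by
      rintro _ ⟨z, hz, rfl⟩
      rw [← hΦ.succ]
      exact hC hz
    have hCB : MapsTo (Φ j 1) C B := fun z hz =>
      hΦ.mem_of_apply_mem hB k (j + 1) _ (hC' (mem_image_of_mem _ hz))
    calc dist x y ≤ η * dist (Φ j 1 x) (Φ j 1 y) := hcontr j C hCc hCB x hx y hy
      _ ≤ η * (δ * η ^ k) := by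
          gcongr
          exact hΦ.dist_le_of_mapsTo hcont hB hη hδ hcontr k (j + 1) _
            (hCc.image _ (hcont j).continuousOn) hC' _ (mem_image_of_mem _ hx) _
            (mem_image_of_mem _ hy)
      _ = δ * η ^ (k + 1) := by ring

end IsBlockComposition

section Composites

variable {P : ℕ → ℂ → ℂ} {Q : ℕ → ℕ → ℂ → ℂ}

theorem Q_comp (hQ0 : ∀ n z, Q n n z = z)
    (hQs : ∀ a n z, a ≤ n → Q a (n + 1) z = P (n + 1) (Q a n z)) {a b n : ℕ} (hab : a ≤ b)
    (hbn : b ≤ n) (z : ℂ) : Q b n (Q a b z) = Q a n z := by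
  induction n, hbn using Nat.le_induction with
  | base => rw [hQ0]
  | succ n hn ih => rw [hQs b n _ hn, ih, hQs a n z (hab.trans hn)]

theorem Q_add_eq_pow (hQ0 : ∀ n z, Q n n z = z)
    (hQs : ∀ a n z, a ≤ n → Q a (n + 1) z = P (n + 1) (Q a n z)) {a i : ℕ}
    (hsq : ∀ n, a < n → n ≤ a + i → ∀ z, P n z = z ^ 2) (z : ℂ) : Q a (a + i) z = z ^ 2 ^ i := by
  induction i with
  | zero => simpa using hQ0 a z
  | succ i ih =>
    rw [← add_assoc, hQs a _ z (Nat.le_add_right a i), ih fun n h₁ h₂ => hsq n h₁ (by omega),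
      hsq _ (by omega) (by omega), ← pow_mul, ← pow_succ]

theorem Q_block {c : ℕ → ℂ} {msq M : ℕ → ℕ} (hQ0 : ∀ n z, Q n n z = z)
    (hQs : ∀ a n z, a ≤ n → Q a (n + 1) z = P (n + 1) (Q a n z)) (hM : Monotone M)
    (hMs : ∀ k, M (k + 1) = M k + (msq (k + 1) + 1))
    (hP1 : ∀ k, 1 ≤ k → ∀ z, P (M k) z = z ^ 2 + c k)
    (hP2 : ∀ n, (∀ k, 1 ≤ k → M k ≠ n) → ∀ z, P n z = z ^ 2) (j : ℕ) (z : ℂ) :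
    Q (M j) (M (j + 1)) z = z ^ 2 ^ (msq (j + 1) + 1) + c (j + 1) := by
  have hsq : ∀ n, M j < n → n ≤ M j + msq (j + 1) → ∀ z, P n z = z ^ 2 := fun n h₁ h₂ =>
    hP2 n fun k _ hkn => by
      rcases le_or_gt k j with h | h
      · have := hM h
        omega
      · have := hM (show j + 1 ≤ k from h)
        have := hMs j
        omega
  have hnext : M (j + 1) = M j + msq (j + 1) + 1 := by rw [hMs, add_assoc]
  rw [hnext, hQs _ _ z (Nat.le_add_right _ _), Q_add_eq_pow hQ0 hQs hsq, ← hnext,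
    hP1 (j + 1) j.succ_pos, ← pow_mul, ← pow_succ]

theorem isBlockComposition_Q (hQ0 : ∀ n z, Q n n z = z)
    (hQs : ∀ a n z, a ≤ n → Q a (n + 1) z = P (n + 1) (Q a n z)) {M : ℕ → ℕ}
    (hM : Monotone M) : IsBlockComposition fun j k => Q (M j) (M (j + k)) where
  zero j := hQ0 (M j)
  succ j k x := by
    rw [Q_comp hQ0 hQs (hM j.le_succ) (hM (by omega)), add_right_comm, add_assoc]

end Composites

theorem stmt_13_general
    (c : ℕ → ℂ) (msq : ℕ → ℕ)
    (hc : ∀ k, 1 ≤ k → 4 < ‖c k‖)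
    (hinv : ∀ k, 1 ≤ k → Real.sqrt (‖c k‖) + 1 < (2 : ℝ) ^ 2 ^ msq k)
    (M : ℕ → ℕ) (hM0 : M 0 = 0)
    (hMs : ∀ k, M (k + 1) = M k + (msq (k + 1) + 1))
    (P : ℕ → ℂ → ℂ)
    (hP1 : ∀ k, 1 ≤ k → ∀ z, P (M k) z = z ^ 2 + c k)
    (hP2 : ∀ n, (∀ k, 1 ≤ k → M k ≠ n) → ∀ z, P n z = z ^ 2)
    (Q : ℕ → ℕ → ℂ → ℂ)
    (hQ0 : ∀ n z, Q n n z = z)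
    (hQs : ∀ a n z, a ≤ n → Q a (n + 1) z = P (n + 1) (Q a n z))
    (S : ℕ → Set ℂ)
    (hS : ∀ k, S k = {z : ℂ | ‖Q 0 (M k) z‖ ≤ 2}) :
    ∀ k, 1 ≤ k → ∀ z ∈ S k,
      Metric.diam (connectedComponentIn (S k) z)
        ≤ 4 * ((2 : ℝ) ^ (-(11 : ℝ) / 4)) ^ k := by
  intro k _ z _
  have hM : Monotone M := monotone_nat_of_le_succ fun n => by rw [hMs]; omega
  have hblock (j : ℕ) : Q (M j) (M (j + 1)) = fun z => z ^ 2 ^ (msq (j + 1) + 1) + c (j + 1) :=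
    funext (Q_block hQ0 hQs hM hMs hP1 hP2 j)
  have hc' (j : ℕ) : 4 < ‖c (j + 1)‖ := hc _ j.succ_pos
  have hinv' (j : ℕ) := hinv _ j.succ_pos
  have hmaps : MapsTo (Q (M 0) (M (0 + k))) (connectedComponentIn (S k) z) (closedBall 0 2) :=
    fun w hw => by
      have := connectedComponentIn_subset (S k) z hw
      rw [hS] at this
      simpa only [hM0, zero_add, mem_closedBall_zero_iff, mem_ofPred_eq] using this
  refine diam_le_of_forall_dist_le (by positivity) fun x hx y hy =>
    (isBlockComposition_Q hQ0 hQs hM).dist_le_of_mapsTo (fun j => ?_) (fun j w hw => ?_)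
      (by positivity) (fun x hx y hy => ?_) (fun j C hC hCB x hx y hy => ?_) k 0 _
      isPreconnected_connectedComponentIn hmaps x hx y hy
  · simp only [hblock]
    fun_prop
  · simp only [mem_closedBall_zero_iff, hblock] at hw ⊢
    exact norm_le_of_norm_pow_add_le (by positivity) zero_le_two
      (two_add_le_two_pow_two_pow_succ (by linarith [hc' j]) (hinv' j)) hw
  · linarith [dist_le_norm_add_norm x y, mem_closedBall_zero_iff.1 hx,
      mem_closedBall_zero_iff.1 hy]
  · simp only [hblock] at hCB ⊢
    exact hC.dist_le_of_mapsTo_pow_add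
      (four_le_two_pow_succ_of_sqrt_add_one_lt (hc' j) (hinv' j)) (hc' j) hCB hx hy

/-- For every k ≥ 1, each connected component of S_k has Euclidean
diameter at most 4·η^k, where η = 2^(−11/4) < 1. -/
theorem stmt_13
    (c : ℕ → ℂ) (msq : ℕ → ℕ)
    (hc : ∀ k, 1 ≤ k → 4 < ‖c k‖)
    (hmsq : ∀ k, 1 ≤ k → 1 ≤ msq k)
    (hinv : ∀ k, 1 ≤ k → Real.sqrt (‖c k‖) + 1 < (2 : ℝ) ^ 2 ^ msq k)
    (M : ℕ → ℕ) (hM0 : M 0 = 0)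
    (hMs : ∀ k, M (k + 1) = M k + (msq (k + 1) + 1))
    (P : ℕ → ℂ → ℂ)
    (hP1 : ∀ k, 1 ≤ k → ∀ z, P (M k) z = z ^ 2 + c k)
    (hP2 : ∀ n, (∀ k, 1 ≤ k → M k ≠ n) → ∀ z, P n z = z ^ 2)
    (Q : ℕ → ℕ → ℂ → ℂ)
    (hQ0 : ∀ n z, Q n n z = z)
    (hQs : ∀ a n z, a ≤ n → Q a (n + 1) z = P (n + 1) (Q a n z))
    (S : ℕ → Set ℂ)
    (hS : ∀ k, S k = {z : ℂ | ‖Q 0 (M k) z‖ ≤ 2}) :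
    ∀ k, 1 ≤ k → ∀ z ∈ S k,
      Metric.diam (connectedComponentIn (S k) z)
        ≤ 4 * ((2 : ℝ) ^ (-(11 : ℝ) / 4)) ^ k :=
  stmt_13_general c msq hc hinv M hM0 hMs P hP1 hP2 Q hQ0 hQs S hS
end

section
/- For every m ≥ 0, the Hausdorff dimension of the m-th iterated Julia set J_m = Q_m(E), where E = ⋂_{k≥1} S_k, satisfies dim_H(Q_m(E)) ≤ 1. In particular dim_H(E) ≤ 1. -/
open Complex Metric Set Filter MeasureTheory

open scoped ENNReal NNReal Topology

/-!
With `w k = Q_{M_k}(z)` and `D_k = 2 ^ (m_k + 1)` one has `w k = w (k-1) ^ D_k + c_k`, and `E` is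
the set of `z` whose orbit `(w k)_{k ≥ 1}` stays in the closed disc of radius 2. Since `|c_k| > 4`
and `|c_k| + 2 ≤ 2 ^ D_k`, each of the `D_k` branches of `u ↦ (u - c_k) ^ (1 / D_k)` maps that
disc into itself and is `1 / D_k`-Lipschitz on it. Pulling the disc back along the branches covers
`E` at level `k` by `D_1 ⋯ D_k` sets of diameter at most `4 / (D_1 ⋯ D_k)`, so `μH[1] E ≤ 4` and
`dimH E ≤ 1`. Each `Q_m` is a polynomial, hence `C¹`, and cannot raise Hausdorff dimension.
-/

section Covers

variable {X : Type*} [EMetricSpace X]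

theorem hausdorffMeasure_le_of_finset_covers [MeasurableSpace X] [BorelSpace X] {d : ℝ}
    (hd : 0 ≤ d) {s : Set X} {C : ℝ≥0∞}
    {r : ℕ → ℝ≥0∞} (hr : Tendsto r atTop (𝓝 0))
    (hcov : ∀ n, ∃ T : Finset (Set X), T.card * r n ^ d ≤ C ∧ s ⊆ ⋃₀ ↑T ∧
      ∀ t ∈ T, ediam t ≤ r n) :
    μH[d] s ≤ C := by
  choose T hcard hsub hdiam using hcov
  have hsum : ∀ n, ∑ t : T n, ediam (t : Set X) ^ d ≤ C := fun n =>
    calc ∑ t : T n, ediam (t : Set X) ^ d = ∑ t ∈ T n, ediam t ^ d :=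
          Finset.sum_coe_sort (T n) (fun t => ediam t ^ d)
      _ ≤ ∑ _t ∈ T n, r n ^ d :=
          Finset.sum_le_sum fun t ht => ENNReal.rpow_le_rpow (hdiam n t ht) hd
      _ = (T n).card * r n ^ d := by rw [Finset.sum_const, nsmul_eq_mul]
      _ ≤ C := hcard n
  calc μH[d] s ≤ liminf (fun n => ∑ t : T n, ediam (t : Set X) ^ d) atTop :=
        Measure.hausdorffMeasure_le_liminf_sum (ι := fun n => T n) d s r hr (fun n t => t)
          (Eventually.of_forall fun n t => hdiam n t t.2)
          (Eventually.of_forall fun n z hz =>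
            let ⟨t, ht, hzt⟩ := hsub n hz; mem_iUnion.2 ⟨⟨t, ht⟩, hzt⟩)
    _ ≤ liminf (fun _ => C) atTop := liminf_le_liminf (Eventually.of_forall hsum)
    _ = C := liminf_const C

theorem exists_finset_cover_of_backward_orbits {B : Set X} {D : ℕ → ℕ} {K : ℕ → ℝ≥0}
    {g : ℕ → ℕ → X → X} (hmaps : ∀ j b, MapsTo (g j b) B B)
    (hlip : ∀ j b, LipschitzOnWith (K j) (g j b) B) (k : ℕ) :
    ∃ T : Finset (Set X), T.card ≤ ∏ j ∈ Finset.range k, D j ∧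
      {z | ∃ w : ℕ → X, w 0 = z ∧ w k ∈ B ∧ ∀ j < k, ∃ b < D j, g j b (w (j + 1)) = w j}
        ⊆ ⋃₀ ↑T ∧
      ∀ t ∈ T, t ⊆ B ∧ ediam t ≤ (∏ j ∈ Finset.range k, K j : ℝ≥0) * ediam B := by
  induction k generalizing D K g with
  | zero =>
    refine ⟨{B}, by simp, ?_, by simp⟩
    rintro _ ⟨w, rfl, hw, -⟩
    simpa using hw
  | succ k ih =>
    obtain ⟨T, hcard, hcov, hT⟩ :=
      ih (D := fun j => D (j + 1)) (fun j => hmaps (j + 1)) (fun j => hlip (j + 1))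
    refine ⟨(Finset.range (D 0) ×ˢ T).image fun p => g 0 p.1 '' p.2, ?_, ?_, ?_⟩
    · calc _ ≤ (Finset.range (D 0) ×ˢ T).card := Finset.card_image_le
        _ ≤ D 0 * ∏ j ∈ Finset.range k, D (j + 1) := by
          rw [Finset.card_product, Finset.card_range]; gcongr
        _ = ∏ j ∈ Finset.range (k + 1), D j := by rw [Finset.prod_range_succ', mul_comm]
    · rintro _ ⟨w, rfl, hwk, hstep⟩
      obtain ⟨t, ht, hwt⟩ : w 1 ∈ ⋃₀ (T : Set (Set X)) :=
        hcov ⟨fun j => w (j + 1), rfl, hwk, fun j hj => hstep (j + 1) (by omega)⟩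
      obtain ⟨b, hb, hbw⟩ := hstep 0 k.succ_pos
      refine ⟨g 0 b '' t, Finset.mem_image.2 ⟨(b, t), ?_, rfl⟩, hbw ▸ mem_image_of_mem _ hwt⟩
      exact Finset.mem_product.2 ⟨Finset.mem_range.2 hb, ht⟩
    · simp only [Finset.mem_image, Finset.mem_product, Finset.mem_range]
      rintro _ ⟨⟨b, t⟩, ⟨-, ht⟩, rfl⟩
      obtain ⟨htB, htd⟩ := hT t ht
      refine ⟨(hmaps 0 b).mono_left htB |>.image_subset, ?_⟩
      calc ediam (g 0 b '' t) ≤ K 0 * ediam t :=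
            ediam_image_le_iff.2 fun x hx y hy =>
              (hlip 0 b (htB hx) (htB hy)).trans (by gcongr; exact edist_le_ediam_of_mem hx hy)
        _ ≤ K 0 * ((∏ j ∈ Finset.range k, K (j + 1) : ℝ≥0) * ediam B) := by gcongr
        _ = (∏ j ∈ Finset.range (k + 1), K j : ℝ≥0) * ediam B := by
          rw [Finset.prod_range_succ', ← mul_assoc, ENNReal.coe_mul, mul_comm (K 0 : ℝ≥0∞)]

theorem dimH_le_one_of_backward_orbits {B : Set X} {D : ℕ → ℕ}
    (hD : ∀ j, 2 ≤ D j) (hB : ediam B ≠ ∞) {g : ℕ → ℕ → X → X}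
    (hmaps : ∀ j b, MapsTo (g j b) B B) (hlip : ∀ j b, LipschitzOnWith (D j : ℝ≥0)⁻¹ (g j b) B)
    {E : Set X} (hE : ∀ z ∈ E, ∃ w : ℕ → X, w 0 = z ∧ (∀ j, w (j + 1) ∈ B) ∧
      ∀ j, ∃ b < D j, g j b (w (j + 1)) = w j) :
    dimH E ≤ 1 := by
  borelize X
  set N : ℕ → ℕ := fun k => ∏ j ∈ Finset.range k, D j
  have hN0 : ∀ k, N k ≠ 0 := fun k =>
    Finset.prod_ne_zero_iff.2 fun j _ => (two_pos.trans_le (hD j)).ne'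
  have hNtop : Tendsto N atTop atTop :=
    tendsto_atTop_mono
      (fun k => by simpa using Finset.pow_card_le_prod (Finset.range k) D 2 fun j _ => hD j)
      (tendsto_pow_atTop_atTop_of_one_lt one_lt_two)
  have hr : Tendsto (fun k => ediam B / N k) atTop (𝓝 0) := by
    simpa only [div_eq_mul_inv, mul_zero, Function.comp_def] using
      ENNReal.Tendsto.const_mul (ENNReal.tendsto_inv_nat_nhds_zero.comp hNtop) (Or.inr hB)
  have hμ : μH[(1 : ℝ≥0)] E ≤ ediam B := by
    refine hausdorffMeasure_le_of_finset_covers zero_le_one hr fun k => ?_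
    obtain ⟨T, hcard, hcov, hT⟩ :=
      exists_finset_cover_of_backward_orbits (D := D) hmaps hlip k
    have hprod : ((∏ j ∈ Finset.range k, (D j : ℝ≥0)⁻¹ : ℝ≥0) : ℝ≥0∞) * ediam B
        = ediam B / N k := by
      rw [Finset.prod_inv_distrib, ← Nat.cast_prod, ENNReal.coe_inv (by exact_mod_cast hN0 k),
        ENNReal.coe_natCast, div_eq_mul_inv, mul_comm]
    refine ⟨T, ?_, fun z hz => hcov ?_, fun t ht => hprod ▸ (hT t ht).2⟩
    · calc (T.card : ℝ≥0∞) * (ediam B / N k) ^ ((1 : ℝ≥0) : ℝ) ≤ N k * (ediam B / N k) := by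
            rw [NNReal.coe_one, ENNReal.rpow_one]; gcongr
        _ ≤ ediam B := ENNReal.mul_div_le
    · obtain ⟨w, rfl, hwB, hstep⟩ := hE z hz
      have hwB' : ∀ j, w j ∈ B := fun j =>
        let ⟨b, _, hb⟩ := hstep j; hb ▸ hmaps j b (hwB j)
      exact ⟨w, rfl, hwB' k, fun j _ => hstep j⟩
  exact dimH_le_of_hausdorffMeasure_ne_top (ne_top_of_le_ne_top hB hμ)

end Covers

section RootBranch

/-- The `b`-th branch of `(u - c) ^ (1 / D)`; writing `u - c = -c * (1 - u / c)` keeps the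
logarithm off its branch cut when `‖u‖ < ‖c‖`. -/
noncomputable def rootBranch (c : ℂ) (D b : ℕ) (u : ℂ) : ℂ :=
  exp (2 * Real.pi * I / D) ^ b * exp ((log (-c) + log (1 - u / c)) / D)

variable {c u : ℂ} {D : ℕ}

theorem one_sub_div_mem_slitPlane (hu : ‖u‖ < ‖c‖) : 1 - u / c ∈ slitPlane := by
  have hc : c ≠ 0 := norm_pos_iff.1 ((norm_nonneg u).trans_lt hu)
  have : (u / c).re < 1 := (re_le_norm _).trans_lt <| by
    rwa [norm_div, div_lt_one (norm_pos_iff.2 hc)]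
  exact Or.inl (by simpa using this)

theorem rootBranch_pow (hD : D ≠ 0) (hu : ‖u‖ < ‖c‖) (b : ℕ) :
    rootBranch c D b u ^ D = u - c := by
  have hc : c ≠ 0 := norm_pos_iff.1 ((norm_nonneg u).trans_lt hu)
  rw [rootBranch, mul_pow, ← pow_mul, mul_comm b, pow_mul,
    (isPrimitiveRoot_exp D hD).pow_eq_one, one_pow, one_mul, ← exp_nat_mul,
    mul_div_cancel₀ _ (Nat.cast_ne_zero.2 hD), exp_add, exp_log (neg_ne_zero.2 hc),
    exp_log (slitPlane_ne_zero (one_sub_div_mem_slitPlane hu))]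
  field_simp
  ring

theorem exists_rootBranch_eq (hD : D ≠ 0) (hu : ‖u‖ < ‖c‖) {w : ℂ} (hw : w ^ D = u - c) :
    ∃ b < D, rootBranch c D b u = w := by
  have huc : u - c ≠ 0 := sub_ne_zero.2 fun h => hu.ne (by rw [h])
  have h0 : rootBranch c D 0 u ≠ 0 := by simp [rootBranch, exp_ne_zero]
  have hq : (w / rootBranch c D 0 u) ^ D = 1 := by
    rw [div_pow, hw, rootBranch_pow hD hu, div_self huc]
  have : NeZero D := ⟨hD⟩
  obtain ⟨b, hb, hζ⟩ := (isPrimitiveRoot_exp D hD).eq_pow_of_pow_eq_one hq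
  refine ⟨b, hb, ?_⟩
  have : rootBranch c D b u = exp (2 * Real.pi * I / D) ^ b * rootBranch c D 0 u := by
    simp [rootBranch]
  rw [this, hζ, div_mul_cancel₀ _ h0]

theorem hasDerivAt_rootBranch (hD : D ≠ 0) (hu : ‖u‖ < ‖c‖) (b : ℕ) :
    HasDerivAt (rootBranch c D b) (rootBranch c D b u / (D * (u - c))) u := by
  have hc : c ≠ 0 := norm_pos_iff.1 ((norm_nonneg u).trans_lt hu)
  have hcu : u - c ≠ 0 := sub_ne_zero.2 fun h => hu.ne (by rw [h])
  have hlog : HasDerivAt (fun u => log (1 - u / c)) (u - c)⁻¹ u := by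
    refine ((((hasDerivAt_id' u).div_const c).const_sub 1).clog
      (one_sub_div_mem_slitPlane hu)).congr_deriv ?_
    rw [← neg_sub c u] at hcu ⊢
    field_simp
  refine (((hlog.const_add _).div_const (D : ℂ)).cexp.const_mul _).congr_deriv ?_
  rw [rootBranch]
  field_simp

theorem norm_rootBranch_le (hD : D ≠ 0) (hc : 2 < ‖c‖) (hcD : ‖c‖ + 2 ≤ 2 ^ D) (b : ℕ)
    (hu : ‖u‖ ≤ 2) : ‖rootBranch c D b u‖ ≤ 2 := by
  refine le_of_pow_le_pow_left₀ hD zero_le_two ?_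
  calc ‖rootBranch c D b u‖ ^ D = ‖u - c‖ := by
        rw [← norm_pow, rootBranch_pow hD (hu.trans_lt hc)]
    _ ≤ ‖u‖ + ‖c‖ := norm_sub_le u c
    _ ≤ 2 ^ D := by linarith

theorem mapsTo_rootBranch (hD : D ≠ 0) (hc : 2 < ‖c‖) (hcD : ‖c‖ + 2 ≤ 2 ^ D) (b : ℕ) :
    MapsTo (rootBranch c D b) (closedBall 0 2) (closedBall 0 2) := fun u hu => by
  rw [mem_closedBall_zero_iff] at hu ⊢
  exact norm_rootBranch_le hD hc hcD b hu

theorem lipschitzOnWith_rootBranch (hD : D ≠ 0) (hc : 4 ≤ ‖c‖) (hcD : ‖c‖ + 2 ≤ 2 ^ D)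
    (b : ℕ) : LipschitzOnWith (D : ℝ≥0)⁻¹ (rootBranch c D b) (closedBall 0 2) := by
  refine (convex_closedBall 0 2).lipschitzOnWith_of_nnnorm_hasDerivWithin_le
    (fun u hu => (hasDerivAt_rootBranch hD ?_ b).hasDerivWithinAt) fun u hu => ?_
  · rw [mem_closedBall_zero_iff] at hu; linarith
  rw [mem_closedBall_zero_iff] at hu
  have hroot := norm_rootBranch_le hD (by linarith) hcD b hu
  have huc : 2 ≤ ‖u - c‖ := by
    have := norm_sub_norm_le c u; rw [norm_sub_rev] at this; linarith
  rw [← NNReal.coe_le_coe, coe_nnnorm, NNReal.coe_inv, NNReal.coe_natCast, norm_div, norm_mul,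
    Complex.norm_natCast, div_le_iff₀ (by positivity)]
  calc ‖rootBranch c D b u‖ ≤ 2 := hroot
    _ ≤ ‖u - c‖ := huc
    _ = (D : ℝ)⁻¹ * (D * ‖u - c‖) := by field_simp

end RootBranch

theorem dimH_le_one_of_orbits_mem_closedBall {c : ℕ → ℂ} {D : ℕ → ℕ} (hD : ∀ j, 2 ≤ D j)
    (hc : ∀ j, 4 ≤ ‖c j‖) (hcD : ∀ j, ‖c j‖ + 2 ≤ 2 ^ D j) {E : Set ℂ}
    (hE : ∀ z ∈ E, ∃ w : ℕ → ℂ, w 0 = z ∧ (∀ j, ‖w (j + 1)‖ ≤ 2) ∧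
      ∀ j, w (j + 1) = w j ^ D j + c j) :
    dimH E ≤ 1 := by
  have hD0 : ∀ j, D j ≠ 0 := fun j => (two_pos.trans_le (hD j)).ne'
  have hB : ediam (closedBall (0 : ℂ) 2) ≠ ∞ := isBounded_closedBall.ediam_ne_top
  refine dimH_le_one_of_backward_orbits hD hB
    (fun j => mapsTo_rootBranch (hD0 j) (by linarith [hc j]) (hcD j))
    (fun j => lipschitzOnWith_rootBranch (hD0 j) (hc j) (hcD j)) fun z hz => ?_
  obtain ⟨w, hw0, hwB, hstep⟩ := hE z hz
  refine ⟨w, hw0, fun j => mem_closedBall_zero_iff.2 (hwB j), fun j => ?_⟩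
  exact exists_rootBranch_eq (hD0 j) (by linarith [hwB j, hc j]) (by rw [hstep]; ring)

theorem add_two_le_two_pow_two_pow {x : ℝ} (hx : 0 ≤ x) {m : ℕ} (h : √x + 1 < 2 ^ 2 ^ m) :
    x + 2 ≤ 2 ^ 2 ^ (m + 1) := by
  have ht : (2 : ℝ) ≤ 2 ^ 2 ^ m := le_self_pow₀ one_le_two (by positivity)
  rw [pow_succ, pow_mul]
  nlinarith [Real.sq_sqrt hx, Real.sqrt_nonneg x]

section Iterates

variable {P : ℕ → ℂ → ℂ} {Q : ℕ → ℕ → ℂ → ℂ}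

theorem iterate_trans (hQ0 : ∀ n z, Q n n z = z)
    (hQs : ∀ a n z, a ≤ n → Q a (n + 1) z = P (n + 1) (Q a n z))
    {l a n : ℕ} (hla : l ≤ a) (han : a ≤ n) (z : ℂ) :
    Q l n z = Q a n (Q l a z) := by
  induction n, han using Nat.le_induction with
  | base => rw [hQ0]
  | succ n han ih => rw [hQs l n z (hla.trans han), ih, hQs a n _ han]

theorem iterate_add_eq_pow (hQ0 : ∀ n z, Q n n z = z)
    (hQs : ∀ a n z, a ≤ n → Q a (n + 1) z = P (n + 1) (Q a n z))
    {a r : ℕ} (hsq : ∀ i < r, ∀ z, P (a + i + 1) z = z ^ 2) (z : ℂ) :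
    Q a (a + r) z = z ^ 2 ^ r := by
  induction r with
  | zero => simpa using hQ0 a z
  | succ r ih =>
    rw [← add_assoc, hQs a _ z (Nat.le_add_right a r), ih fun i hi => hsq i (by omega),
      hsq r r.lt_succ_self, ← pow_mul, pow_succ]

theorem contDiff_iterate (hQ0 : ∀ n z, Q n n z = z)
    (hQs : ∀ a n z, a ≤ n → Q a (n + 1) z = P (n + 1) (Q a n z))
    (hP : ∀ n z, P n z = z ^ 2 + P n 0) {n : WithTop ℕ∞} (m : ℕ) :
    ContDiff ℝ n (Q 0 m) := by
  induction m with
  | zero => exact (funext (hQ0 0) : Q 0 0 = id) ▸ contDiff_id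
  | succ m ih =>
    have : Q 0 (m + 1) = fun z => Q 0 m z ^ 2 + P (m + 1) 0 := by
      funext z; rw [hQs 0 m z m.zero_le, hP]
    rw [this]
    exact (ih.pow 2).add contDiff_const

theorem iterate_M_succ (hQ0 : ∀ n z, Q n n z = z)
    (hQs : ∀ a n z, a ≤ n → Q a (n + 1) z = P (n + 1) (Q a n z))
    {c : ℕ → ℂ} {msq M : ℕ → ℕ} (hMs : ∀ k, M (k + 1) = M k + (msq (k + 1) + 1))
    (hP1 : ∀ k, 1 ≤ k → ∀ z, P (M k) z = z ^ 2 + c k)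
    (hP2 : ∀ n, (∀ k, 1 ≤ k → M k ≠ n) → ∀ z, P n z = z ^ 2) (k : ℕ) (z : ℂ) :
    Q 0 (M (k + 1)) z = Q 0 (M k) z ^ 2 ^ (msq (k + 1) + 1) + c (k + 1) := by
  have hM : StrictMono M := strictMono_nat_of_lt_succ fun k => by rw [hMs]; omega
  have hsq : ∀ i < msq (k + 1), ∀ z, P (M k + i + 1) z = z ^ 2 := fun i hi =>
    hP2 _ fun j _ hj => by
      rcases le_or_gt j k with hjk | hjk
      · have := hM.monotone hjk; omega
      · have : M (k + 1) ≤ M j := hM.monotone hjk; have := hMs k; omega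
  rw [iterate_trans hQ0 hQs (Nat.zero_le (M k)) (Nat.le.intro (hMs k).symm), hMs, ← add_assoc,
    hQs _ _ _ (Nat.le_add_right _ _), iterate_add_eq_pow hQ0 hQs hsq, add_assoc, ← hMs,
    hP1 (k + 1) k.succ_pos, ← pow_mul, ← pow_succ]

theorem eq_sq_add_apply_zero {c : ℕ → ℂ} {M : ℕ → ℕ}
    (hP1 : ∀ k, 1 ≤ k → ∀ z, P (M k) z = z ^ 2 + c k)
    (hP2 : ∀ n, (∀ k, 1 ≤ k → M k ≠ n) → ∀ z, P n z = z ^ 2) (n : ℕ) (z : ℂ) :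
    P n z = z ^ 2 + P n 0 := by
  by_cases h : ∃ k, 1 ≤ k ∧ M k = n
  · obtain ⟨k, hk, rfl⟩ := h
    simp [hP1 k hk]
  · simp only [not_exists, not_and] at h
    simp [hP2 n h]

end Iterates

theorem stmt_14_general
    (c : ℕ → ℂ) (msq : ℕ → ℕ)
    (hc : ∀ k, 1 ≤ k → 4 < ‖c k‖)
    (hinv : ∀ k, 1 ≤ k → Real.sqrt (‖c k‖) + 1 < (2 : ℝ) ^ 2 ^ msq k)
    (M : ℕ → ℕ) (hM0 : M 0 = 0)
    (hMs : ∀ k, M (k + 1) = M k + (msq (k + 1) + 1))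
    (P : ℕ → ℂ → ℂ)
    (hP1 : ∀ k, 1 ≤ k → ∀ z, P (M k) z = z ^ 2 + c k)
    (hP2 : ∀ n, (∀ k, 1 ≤ k → M k ≠ n) → ∀ z, P n z = z ^ 2)
    (Q : ℕ → ℕ → ℂ → ℂ)
    (hQ0 : ∀ n z, Q n n z = z)
    (hQs : ∀ a n z, a ≤ n → Q a (n + 1) z = P (n + 1) (Q a n z))
    (S : ℕ → Set ℂ)
    (hS : ∀ k, S k = {z : ℂ | ‖Q 0 (M k) z‖ ≤ 2})
    (E : Set ℂ) (hE : E = ⋂ k, ⋂ (_ : 1 ≤ k), S k) :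
    (∀ m : ℕ, dimH (Q 0 m '' E) ≤ 1) ∧ dimH E ≤ 1 := by
  have hdimE : dimH E ≤ 1 := by
    refine dimH_le_one_of_orbits_mem_closedBall (c := fun j => c (j + 1))
      (D := fun j => 2 ^ (msq (j + 1) + 1)) (fun j => Nat.le_self_pow (Nat.succ_ne_zero _) 2)
      (fun j => (hc (j + 1) j.succ_pos).le)
      (fun j => add_two_le_two_pow_two_pow (norm_nonneg _) (hinv (j + 1) j.succ_pos))
      fun z hz => ⟨fun j => Q 0 (M j) z, by simp only [hM0, hQ0], fun j => ?_,
        fun j => iterate_M_succ hQ0 hQs hMs hP1 hP2 j z⟩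
    rw [hE] at hz
    simpa [hS] using mem_iInter₂.1 hz (j + 1) j.succ_pos
  refine ⟨fun m => ?_, hdimE⟩
  exact ((contDiff_iterate hQ0 hQs (eq_sq_add_apply_zero hP1 hP2) m).contDiffOn.dimH_image_le
    convex_univ (subset_univ E)).trans hdimE

/-- For every m ≥ 0, dim_H(Q_m(E)) ≤ 1; in particular dim_H(E) ≤ 1. -/
theorem stmt_14
    (c : ℕ → ℂ) (msq : ℕ → ℕ)
    (hc : ∀ k, 1 ≤ k → 4 < ‖c k‖)
    (hmsq : ∀ k, 1 ≤ k → 1 ≤ msq k)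
    (hinv : ∀ k, 1 ≤ k → Real.sqrt (‖c k‖) + 1 < (2 : ℝ) ^ 2 ^ msq k)
    (M : ℕ → ℕ) (hM0 : M 0 = 0)
    (hMs : ∀ k, M (k + 1) = M k + (msq (k + 1) + 1))
    (P : ℕ → ℂ → ℂ)
    (hP1 : ∀ k, 1 ≤ k → ∀ z, P (M k) z = z ^ 2 + c k)
    (hP2 : ∀ n, (∀ k, 1 ≤ k → M k ≠ n) → ∀ z, P n z = z ^ 2)
    (Q : ℕ → ℕ → ℂ → ℂ)
    (hQ0 : ∀ n z, Q n n z = z)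
    (hQs : ∀ a n z, a ≤ n → Q a (n + 1) z = P (n + 1) (Q a n z))
    (S : ℕ → Set ℂ)
    (hS : ∀ k, S k = {z : ℂ | ‖Q 0 (M k) z‖ ≤ 2})
    (E : Set ℂ) (hE : E = ⋂ k, ⋂ (_ : 1 ≤ k), S k) :
    (∀ m : ℕ, dimH (Q 0 m '' E) ≤ 1) ∧ dimH E ≤ 1 :=
  stmt_14_general c msq hc hinv M hM0 hMs P hP1 hP2 Q hQ0 hQs S hS E hE
end

section
/- Every pointwise thin compact set E ⊂ ℂ is hereditarily non uniformly perfect: for every compact subset F ⊆ E containing at least two points, there is no finite upper bound on the moduli of round annuli separating F; that is, for every C > 0 there exist z ∈ ℂ and 0 < r < R with log(R/r) > C such that {w : r < |w − z| < R} is disjoint from F while F meets both D̄(z,r) and {w : |w − z| ≥ R}. -/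
open Complex Metric Set Filter

/-- A round annulus {w : r < |w − z| < R} separates F: it is disjoint from F while
F meets both the closed disc D̄(z,r) and the set {w : |w − z| ≥ R}. -/
def SeparatesAnnulus (F : Set ℂ) (z : ℂ) (r R : ℝ) : Prop :=
  (∀ w ∈ F, ¬(r < ‖w - z‖ ∧ ‖w - z‖ < R)) ∧
  (∃ w ∈ F, ‖w - z‖ ≤ r) ∧
  (∃ w ∈ F, R ≤ ‖w - z‖)

/-- F is pointwise thin: for each z ∈ F there are 0 < r_n < R_n with R_n → 0 and
R_n/r_n → ∞ such that each round annulus A(z, r_n, R_n) separates F. -/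
def PointwiseThin (F : Set ℂ) : Prop :=
  ∀ z ∈ F, ∃ r R : ℕ → ℝ,
    (∀ n, 0 < r n ∧ r n < R n) ∧
    Filter.Tendsto R Filter.atTop (nhds 0) ∧
    Filter.Tendsto (fun n => R n / r n) Filter.atTop Filter.atTop ∧
    ∀ n, SeparatesAnnulus F z (r n) (R n)

/-- E is hereditarily non uniformly perfect: no compact subset with at least two
points admits a finite upper bound on the moduli of separating round annuli. -/
def HNUP (E : Set ℂ) : Prop :=
  ∀ F ⊆ E, IsCompact F → (∃ a ∈ F, ∃ b ∈ F, a ≠ b) →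
    ∀ C > 0, ∃ (z : ℂ) (r R : ℝ), 0 < r ∧ r < R ∧ C < Real.log (R / r) ∧
      SeparatesAnnulus F z r R

/-! Around a point `a ∈ F` the thinness of `E` gives separating annuli of arbitrarily large
modulus and arbitrarily small outer radius. Once the outer radius is below `|b - a|` for a
second point `b ∈ F`, the annulus also separates `F`: it misses `F ⊆ E`, its centre `a`
lies in the inner disc and `b` lies outside. -/

theorem SeparatesAnnulus.of_subset {E F : Set ℂ} {z : ℂ} {r R : ℝ}
    (h : SeparatesAnnulus E z r R) (hFE : F ⊆ E)
    (hin : ∃ w ∈ F, ‖w - z‖ ≤ r) (hout : ∃ w ∈ F, R ≤ ‖w - z‖) :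
    SeparatesAnnulus F z r R :=
  ⟨fun w hw => h.1 w (hFE hw), hin, hout⟩

theorem PointwiseThin.exists_separatesAnnulus {E : Set ℂ} (hE : PointwiseThin E) {z : ℂ}
    (hz : z ∈ E) {ρ : ℝ} (hρ : 0 < ρ) (C : ℝ) :
    ∃ r R : ℝ, 0 < r ∧ r < R ∧ R < ρ ∧ C < Real.log (R / r) ∧ SeparatesAnnulus E z r R := by
  obtain ⟨r, R, hrR, hR, hRr, hsep⟩ := hE z hz
  have hsmall : ∀ᶠ n in atTop, R n < ρ := hR.eventually_lt_const hρ
  have hlarge : ∀ᶠ n in atTop, C < Real.log (R n / r n) :=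
    (Real.tendsto_log_atTop.comp hRr).eventually_gt_atTop C
  obtain ⟨n, hn⟩ := (hsmall.and hlarge).exists
  exact ⟨r n, R n, (hrR n).1, (hrR n).2, hn.1, hn.2, hsep n⟩

theorem stmt_17_general
    (E : Set ℂ) (hpt : PointwiseThin E) :
    ∀ F ⊆ E, IsCompact F → (∃ a ∈ F, ∃ b ∈ F, a ≠ b) →
      ∀ C > 0, ∃ (z : ℂ) (r R : ℝ), 0 < r ∧ r < R ∧ C < Real.log (R / r) ∧
        SeparatesAnnulus F z r R := by
  intro F hFE _ ⟨a, ha, b, hb, hab⟩ C _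
  obtain ⟨r, R, hr, hrR, hRba, hC, hsep⟩ :=
    hpt.exists_separatesAnnulus (hFE ha) (norm_pos_iff.mpr (sub_ne_zero.mpr hab.symm)) C
  refine ⟨a, r, R, hr, hrR, hC, hsep.of_subset hFE ⟨a, ha, ?_⟩ ⟨b, hb, hRba.le⟩⟩
  simpa using hr.le

/-- Every pointwise thin compact set E ⊂ ℂ is hereditarily non
uniformly perfect: no compact subset F ⊆ E with at least two points admits a
finite upper bound on the moduli of round annuli separating F. -/
theorem stmt_17
    (E : Set ℂ) (hEc : IsCompact E) (hpt : PointwiseThin E) :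
    ∀ F ⊆ E, IsCompact F → (∃ a ∈ F, ∃ b ∈ F, a ≠ b) →
      ∀ C > 0, ∃ (z : ℂ) (r R : ℝ), 0 < r ∧ r < R ∧ C < Real.log (R / r) ∧
        SeparatesAnnulus F z r R :=
  stmt_17_general E hpt
end
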